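/- arXiv:2105.06303 — 4 statements merged into one kernel-verified Lean document; each statement's English description precedes it below -/
import Mathlib

section
/- Let $a,b$ be positive integers, $m \geq 1$ an integer, $\kappa_1,\kappa_2 \geq 0$ real numbers, and $D>0$ with $\sqrt{\kappa_2}\,D/2 < \pi/2$ and $2\sqrt{\kappa_1}\,D/2 < \pi/2$. Suppose $\lambda \in \mathbb{R}$ and $\varphi$ is a twice continuously differentiable real-valued function on $[-D/2,D/2]$ satisfying the ODE $\varphi''(t)-\big(2a(m-1)\sqrt{\kappa_2}\tan(\sqrt{\kappa_2}\,t)+2b\sqrt{\kappa_1}\tan(2\sqrt{\kappa_1}\,t)\big)\varphi'(t)+\lambda\varphi(t)=0$ for all $t\in[-D/2,D/2]$, with Neumann boundary conditions $\varphi'(-D/2)=\varphi'(D/2)=0$, and such that $\varphi' \geq 0$ on $[-D/2,D/2]$ and $\varphi$ is not constant. Then for every $s\in(0,1)$, $\lambda \geq 4s(1-s)\frac{\pi^2}{D^2} + s\big(2a(m-1)\kappa_2 + 4b\kappa_1\big)$. -/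
/-!
On `[-L, L]` with `L = D/2`, put `v = φ'`, `β = π / (2L)`, `p = 4s(1-s)`, and let `G > 0` with
`G' = -T G`, where `T` is the drift and `T' ≥ K` (for the tangent drift, `G` is a product of
powers of cosines). Then `v` solves `v'' = T v' + (T' - λ) v` and vanishes at `±L`. The weight
`h = G^s cos(βt)^p` vanishes at `±L`, and with `Q = h'/h + T` the weighted Wronskian
`Y = h (v' - Q v)` has `Y' = -h v E`, where `E = Q' + Q² - T Q - T' + λ`. Completing the square,
`E = λ - (p β² + s K) - s (T' - K) - s(1-s) (T - 2(2s-1) β tan βt)²`,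
so if `λ` were below the bound, `E < 0` and `Y` would be nondecreasing. Since `v` vanishes to
first order at `±L` and `cos βt ≥ (L - |t|)/L`, the factor `v' - Q v` stays bounded, so `Y → 0`
at both ends. Hence `Y ≡ 0`, then `v ≡ 0`, and `φ` is constant.
-/

open Real Set Filter Topology

lemma cos_mul_pos {c t : ℝ} (hc : 0 ≤ c) (h : c * |t| < π / 2) : 0 < cos (c * t) := by
  refine cos_pos_of_mem_Ioo (abs_lt.mp ?_)
  rwa [abs_mul, abs_of_nonneg hc]

lemma cos_pi_div_two_mul_pos {L t : ℝ} (hL : 0 < L) (ht : t ∈ Ioo (-L) L) :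
    0 < cos (π / (2 * L) * t) :=
  cos_mul_pos (by positivity) <| calc
    π / (2 * L) * |t| < π / (2 * L) * L := by gcongr; exact abs_lt.mpr ht
    _ = π / 2 := by field_simp

lemma sub_abs_le_mul_cos {L t : ℝ} (hL : 0 < L) (ht : |t| ≤ L) :
    L - |t| ≤ L * cos (π / (2 * L) * t) := by
  have hβ : 0 < π / (2 * L) := by positivity
  have h := one_sub_mul_le_cos (mul_nonneg hβ.le (abs_nonneg t))
    (by rw [div_mul_eq_mul_div, div_le_div_iff₀ (by positivity) two_pos]; nlinarith [pi_pos])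
  rw [← abs_of_pos hβ, ← abs_mul, cos_abs, abs_mul, abs_of_pos hβ] at h
  calc L - |t| = L * (1 - 2 / π * (π / (2 * L) * |t|)) := by field_simp
    _ ≤ L * cos (π / (2 * L) * t) := mul_le_mul_of_nonneg_left h hL.le

lemma hasDerivAt_cos_mul {c t : ℝ} (h : cos (c * t) ≠ 0) :
    HasDerivAt (fun u => cos (c * u)) (-(c * tan (c * t)) * cos (c * t)) t := by
  refine (((hasDerivAt_id' t).const_mul c).cos).congr_deriv ?_
  rw [tan_eq_sin_div_cos]
  field_simp

lemma hasDerivAt_tan_mul {c t : ℝ} (h : cos (c * t) ≠ 0) :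
    HasDerivAt (fun u => tan (c * u)) (c * (1 + tan (c * t) ^ 2)) t := by
  refine ((hasDerivAt_tan h).comp t ((hasDerivAt_id' t).const_mul c)).congr_deriv ?_
  rw [← inv_one_add_tan_sq h]
  simp [mul_comm]

lemma HasDerivAt.rpow_const_of_eq_mul {f : ℝ → ℝ} {q x : ℝ} (p : ℝ)
    (hf : HasDerivAt f (q * f x) x) (hx : f x ≠ 0) :
    HasDerivAt (fun y => f y ^ p) (p * q * f x ^ p) x := by
  refine (hf.rpow_const (p := p) (Or.inl hx)).congr_deriv ?_
  rw [rpow_sub_one hx]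
  field_simp

lemma abs_le_mul_sub_abs {L M : ℝ} {f f' : ℝ → ℝ}
    (hf : ∀ t ∈ Icc (-L) L, HasDerivAt f (f' t) t) (hM : ∀ t ∈ Icc (-L) L, |f' t| ≤ M)
    (h₁ : f (-L) = 0) (h₂ : f L = 0) {t : ℝ} (ht : t ∈ Icc (-L) L) :
    |f t| ≤ M * (L - |t|) := by
  have hdist : ∀ a ∈ Icc (-L) L, f a = 0 → |f t| ≤ M * |t - a| := fun a ha h0 => by
    simpa [h0, Real.norm_eq_abs] using
      (convex_Icc (-L) L).norm_image_sub_le_of_norm_hasDerivWithin_le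
        (fun u hu => (hf u hu).hasDerivWithinAt) hM ha ht
  have hL : -L ≤ L := ht.1.trans ht.2
  rcases le_total 0 t with h0 | h0
  · have := hdist L ⟨hL, le_rfl⟩ h₂
    rw [abs_of_nonneg h0]
    rwa [abs_sub_comm, abs_of_nonneg (sub_nonneg.mpr ht.2)] at this
  · have := hdist (-L) ⟨le_rfl, hL⟩ h₁
    rw [abs_of_nonpos h0, sub_neg_eq_add]
    rwa [sub_neg_eq_add, add_comm, abs_of_nonneg (by linarith [ht.1] : 0 ≤ L + t)] at this

lemma abs_mul_tan_le {L M : ℝ} {f f' : ℝ → ℝ} (hL : 0 < L)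
    (hf : ∀ t ∈ Icc (-L) L, HasDerivAt f (f' t) t) (hM : ∀ t ∈ Icc (-L) L, |f' t| ≤ M)
    (h₁ : f (-L) = 0) (h₂ : f L = 0) {t : ℝ} (ht : t ∈ Ioo (-L) L) :
    |f t * tan (π / (2 * L) * t)| ≤ M * L := by
  have hc := cos_pi_div_two_mul_pos hL ht
  have hM₀ : 0 ≤ M := (abs_nonneg _).trans (hM 0 ⟨by linarith, hL.le⟩)
  have hft : |f t| ≤ M * L * cos (π / (2 * L) * t) := by
    rw [mul_assoc]
    exact (abs_le_mul_sub_abs hf hM h₁ h₂ (Ioo_subset_Icc_self ht)).trans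
      (mul_le_mul_of_nonneg_left (sub_abs_le_mul_cos hL (abs_lt.mpr ht).le) hM₀)
  calc |f t * tan (π / (2 * L) * t)|
      ≤ M * L * cos (π / (2 * L) * t) * |tan (π / (2 * L) * t)| := by
        rw [abs_mul]; gcongr
    _ = M * L * |sin (π / (2 * L) * t)| := by
        rw [mul_assoc, ← abs_of_pos hc, ← abs_mul, mul_comm (cos _), tan_mul_cos hc.ne']
    _ ≤ M * L := mul_le_of_le_one_right (by positivity) (abs_sin_le_one _)

lemma exists_abs_sub_mul_le {L c γ : ℝ} {T φ' φ'' : ℝ → ℝ} (hL : 0 < L)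
    (hT : ContinuousOn T (Icc (-L) L)) (hd2 : ∀ t ∈ Icc (-L) L, HasDerivAt φ' (φ'' t) t)
    (hc2 : ContinuousOn φ'' (Icc (-L) L)) (hNeu₁ : φ' (-L) = 0) (hNeu₂ : φ' L = 0) :
    ∃ C, ∀ t ∈ Ioo (-L) L,
      |φ'' t - (c * T t - γ * tan (π / (2 * L) * t)) * φ' t| ≤ C := by
  obtain ⟨M, hM⟩ := isCompact_Icc.exists_bound_of_continuousOn hc2
  obtain ⟨B, hB⟩ := isCompact_Icc.exists_bound_of_continuousOn
    (hc2.sub ((continuousOn_const.mul hT).mul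
      fun t ht => (hd2 t ht).continuousAt.continuousWithinAt))
  refine ⟨B + |γ| * (M * L), fun t ht => ?_⟩
  have htan := abs_mul_tan_le hL hd2 (fun t ht => by simpa using hM t ht) hNeu₁ hNeu₂ ht
  calc |φ'' t - (c * T t - γ * tan (π / (2 * L) * t)) * φ' t|
      = |(φ'' t - c * T t * φ' t) + γ * (φ' t * tan (π / (2 * L) * t))| := by congr 1; ring
    _ ≤ B + |γ| * (M * L) := by
      refine (abs_add_le _ _).trans (add_le_add ?_ ?_)
      · simpa using hB t (Ioo_subset_Icc_self ht)
      · rw [abs_mul]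
        gcongr

lemma MonotoneOn.eqOn_zero_of_abs_le_mul {l r C : ℝ} {Y h : ℝ → ℝ}
    (hY : MonotoneOn Y (Ioo l r)) (hh : ContinuousOn h (Icc l r)) (hl : h l = 0) (hr : h r = 0)
    (hbound : ∀ t ∈ Ioo l r, |Y t| ≤ C * h t) : EqOn Y 0 (Ioo l r) := by
  intro t ht
  have hCh {e : ℝ} (he : e ∈ Icc l r) {s : Set ℝ} (hs : s ⊆ Icc l r) :
      ContinuousWithinAt (fun x => C * h x) s e :=
    ((hh e he).mono hs).const_mul C
  have hup : Y t ≤ C * h r := by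
    refine ContinuousWithinAt.closure_le (f := fun _ => Y t) (g := fun x => C * h x)
      (s := Ioo t r) ?_
      continuousWithinAt_const (hCh ⟨ht.1.le.trans ht.2.le, le_rfl⟩ ?_) fun x hx => ?_
    · rw [closure_Ioo ht.2.ne]; exact right_mem_Icc.mpr ht.2.le
    · exact Ioo_subset_Icc_self.trans (Icc_subset_Icc ht.1.le le_rfl)
    · have hx' : x ∈ Ioo l r := ⟨ht.1.trans hx.1, hx.2⟩
      exact (hY ht hx' hx.1.le).trans ((le_abs_self _).trans (hbound x hx'))
  have hdown : -(C * h l) ≤ Y t := by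
    refine ContinuousWithinAt.closure_le (f := fun x => -(C * h x)) (g := fun _ => Y t)
      (s := Ioo l t) ?_
      (hCh ⟨le_rfl, ht.1.le.trans ht.2.le⟩ ?_).neg continuousWithinAt_const fun x hx => ?_
    · rw [closure_Ioo ht.1.ne]; exact left_mem_Icc.mpr ht.1.le
    · exact Ioo_subset_Icc_self.trans (Icc_subset_Icc le_rfl ht.2.le)
    · have hx' : x ∈ Ioo l r := ⟨hx.1, hx.2.trans ht.2⟩
      exact (neg_le_of_abs_le (hbound x hx')).trans (hY hx' ht hx.2.le)
  rw [hr, mul_zero] at hup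
  rw [hl, mul_zero, neg_zero] at hdown
  exact le_antisymm hup hdown

lemma hasDerivAt_weighted_wronskian {h v v₁ Q : ℝ → ℝ} {t T T' Q' lam : ℝ}
    (hh : HasDerivAt h ((Q t - T) * h t) t) (hQ : HasDerivAt Q Q' t)
    (hv : HasDerivAt v (v₁ t) t) (hv₁ : HasDerivAt v₁ (T' * v t + T * v₁ t - lam * v t) t) :
    HasDerivAt (fun x => h x * (v₁ x - Q x * v x))
      (-(h t * v t * (Q' + Q t ^ 2 - T * Q t - T' + lam))) t :=
  (hh.mul (hv₁.sub (hQ.mul hv))).congr_deriv (by simp only [Pi.sub_apply, Pi.mul_apply]; ring)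

lemma eqOn_zero_of_weighted_wronskian {l r lam C : ℝ} {h Q Q' v v₁ T T' : ℝ → ℝ}
    (hh : ContinuousOn h (Icc l r)) (hl : h l = 0) (hr : h r = 0)
    (hpos : ∀ t ∈ Ioo l r, 0 < h t)
    (hh' : ∀ t ∈ Ioo l r, HasDerivAt h ((Q t - T t) * h t) t)
    (hQ : ∀ t ∈ Ioo l r, HasDerivAt Q (Q' t) t)
    (hv : ∀ t ∈ Ioo l r, HasDerivAt v (v₁ t) t)
    (hv₁ : ∀ t ∈ Ioo l r, HasDerivAt v₁ (T' t * v t + T t * v₁ t - lam * v t) t)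
    (hv₀ : ∀ t ∈ Ioo l r, 0 ≤ v t)
    (hE : ∀ t ∈ Ioo l r, Q' t + Q t ^ 2 - T t * Q t - T' t + lam < 0)
    (hbound : ∀ t ∈ Ioo l r, |v₁ t - Q t * v t| ≤ C) :
    EqOn v 0 (Ioo l r) := by
  set Y := fun x => h x * (v₁ x - Q x * v x)
  have hY t (ht : t ∈ Ioo l r) :=
    hasDerivAt_weighted_wronskian (hh' t ht) (hQ t ht) (hv t ht) (hv₁ t ht)
  have hmono : MonotoneOn Y (Ioo l r) := by
    refine monotoneOn_of_hasDerivWithinAt_nonneg (convex_Ioo l r)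
      (f' := fun t => -(h t * v t * (Q' t + Q t ^ 2 - T t * Q t - T' t + lam)))
      (fun t ht => (hY t ht).continuousAt.continuousWithinAt) (fun t ht => ?_) (fun t ht => ?_)
      <;> rw [interior_Ioo] at ht
    · exact (hY t ht).hasDerivWithinAt
    · have := mul_pos (hpos t ht) (neg_pos.mpr (hE t ht))
      nlinarith [hv₀ t ht]
  have hY₀ : EqOn Y 0 (Ioo l r) := hmono.eqOn_zero_of_abs_le_mul hh hl hr fun t ht => by
    rw [abs_mul, abs_of_pos (hpos t ht), mul_comm]
    exact mul_le_mul_of_nonneg_right (hbound t ht) (hpos t ht).le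
  intro t ht
  have hY'₀ : HasDerivAt Y 0 t := (hasDerivAt_const t 0).congr_of_eventuallyEq
    (eventually_of_mem (Ioo_mem_nhds ht.1 ht.2) hY₀)
  simpa [(hpos t ht).ne', (hE t ht).ne] using (hY t ht).unique hY'₀

lemma riccati_defect_neg {s β K T T' τ Q lam : ℝ} (hs : s ∈ Icc (0 : ℝ) 1) (hK : K ≤ T')
    (hQ : Q = (1 - s) * T - 4 * s * (1 - s) * β * τ)
    (hlam : lam < 4 * s * (1 - s) * β ^ 2 + s * K) :
    (1 - s) * T' - 4 * s * (1 - s) * β * (β * (1 + τ ^ 2)) + Q ^ 2 - T * Q - T' + lam < 0 := by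
  have key : (1 - s) * T' - 4 * s * (1 - s) * β * (β * (1 + τ ^ 2)) + Q ^ 2 - T * Q - T' + lam
      = lam - (4 * s * (1 - s) * β ^ 2 + s * K) - s * (T' - K)
        - s * (1 - s) * (T - 2 * (2 * s - 1) * β * τ) ^ 2 := by
    subst hQ; ring
  rw [key]
  nlinarith [mul_nonneg hs.1 (sub_nonneg.mpr hK),
    mul_nonneg (mul_nonneg hs.1 (sub_nonneg.mpr hs.2)) (sq_nonneg (T - 2 * (2 * s - 1) * β * τ))]

lemma hasDerivAt_of_ode {T T' φ φ' φ'' : ℝ → ℝ} {lam t : ℝ}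
    (hT : HasDerivAt T (T' t) t) (hd1 : HasDerivAt φ (φ' t) t) (hd2 : HasDerivAt φ' (φ'' t) t)
    (hODE : ∀ᶠ x in 𝓝 t, φ'' x - T x * φ' x + lam * φ x = 0) :
    HasDerivAt φ'' (T' t * φ' t + T t * φ'' t - lam * φ' t) t :=
  ((hT.mul hd2).sub (hd1.const_mul lam)).congr_of_eventuallyEq
      (hODE.mono fun x hx => by simp only [Pi.sub_apply, Pi.mul_apply]; linarith)
    |>.congr_deriv (by ring)

theorem eqOn_deriv_zero_of_lt {L K lam s : ℝ} {T T' G φ φ' φ'' : ℝ → ℝ}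
    (hL : 0 < L) (hs : s ∈ Ioo (0 : ℝ) 1)
    (hT : ∀ t ∈ Icc (-L) L, HasDerivAt T (T' t) t) (hK : ∀ t ∈ Icc (-L) L, K ≤ T' t)
    (hG : ∀ t ∈ Icc (-L) L, HasDerivAt G (-T t * G t) t) (hG₀ : ∀ t ∈ Icc (-L) L, 0 < G t)
    (hd1 : ∀ t ∈ Icc (-L) L, HasDerivAt φ (φ' t) t)
    (hd2 : ∀ t ∈ Icc (-L) L, HasDerivAt φ' (φ'' t) t)
    (hc2 : ContinuousOn φ'' (Icc (-L) L))
    (hODE : ∀ t ∈ Icc (-L) L, φ'' t - T t * φ' t + lam * φ t = 0)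
    (hNeu₁ : φ' (-L) = 0) (hNeu₂ : φ' L = 0) (hmono : ∀ t ∈ Icc (-L) L, 0 ≤ φ' t)
    (hlam : lam < 4 * s * (1 - s) * (π / (2 * L)) ^ 2 + s * K) :
    EqOn φ' 0 (Ioo (-L) L) := by
  set β := π / (2 * L)
  set p := 4 * s * (1 - s)
  have hp : 0 < p := mul_pos (mul_pos four_pos hs.1) (sub_pos.mpr hs.2)
  have hIoo : Ioo (-L) L ⊆ Icc (-L) L := Ioo_subset_Icc_self
  have hcos t (ht : t ∈ Ioo (-L) L) : cos (β * t) ≠ 0 := (cos_pi_div_two_mul_pos hL ht).ne'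
  have hβL : β * L = π / 2 := by simp only [β]; field_simp
  have hw_end : cos (β * -L) ^ p = 0 ∧ cos (β * L) ^ p = 0 := by
    simp only [mul_neg, cos_neg, hβL, cos_pi_div_two, zero_rpow hp.ne', and_self]
  have hw_cont : ContinuousOn (fun t => G t ^ s * cos (β * t) ^ p) (Icc (-L) L) :=
    (ContinuousOn.rpow_const (fun t ht => (hG t ht).continuousAt.continuousWithinAt)
      fun t ht => Or.inl (hG₀ t ht).ne').mul
    ((continuous_rpow_const hp.le).comp
      (continuous_cos.comp (continuous_const.mul continuous_id))).continuousOn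
  have hw_deriv t (ht : t ∈ Ioo (-L) L) : HasDerivAt (fun t => G t ^ s * cos (β * t) ^ p)
      (((1 - s) * T t - p * β * tan (β * t) - T t) * (G t ^ s * cos (β * t) ^ p)) t :=
    (((hG t (hIoo ht)).rpow_const_of_eq_mul s (hG₀ t (hIoo ht)).ne').mul
      ((hasDerivAt_cos_mul (hcos t ht)).rpow_const_of_eq_mul p (hcos t ht))).congr_deriv (by ring)
  obtain ⟨C, hC⟩ := exists_abs_sub_mul_le (c := 1 - s) (γ := p * β) hL
    (fun t ht => (hT t ht).continuousAt.continuousWithinAt) hd2 hc2 hNeu₁ hNeu₂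
  exact eqOn_zero_of_weighted_wronskian hw_cont (by rw [hw_end.1, mul_zero])
    (by rw [hw_end.2, mul_zero])
    (fun t ht => mul_pos (rpow_pos_of_pos (hG₀ t (hIoo ht)) _)
      (rpow_pos_of_pos (cos_pi_div_two_mul_pos hL ht) _))
    hw_deriv
    (fun t ht => ((hT t (hIoo ht)).const_mul (1 - s)).sub
      ((hasDerivAt_tan_mul (hcos t ht)).const_mul (p * β)))
    (fun t ht => hd2 t (hIoo ht))
    (fun t ht => hasDerivAt_of_ode (hT t (hIoo ht)) (hd1 t (hIoo ht)) (hd2 t (hIoo ht))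
      (eventually_of_mem (Icc_mem_nhds ht.1 ht.2) hODE))
    (fun t ht => hmono t (hIoo ht))
    (fun t ht => riccati_defect_neg ⟨hs.1.le, hs.2.le⟩ (hK t (hIoo ht)) rfl hlam)
    hC

theorem le_eigenvalue_of_neumann_of_monotone {L K lam s : ℝ} {T T' G φ φ' φ'' : ℝ → ℝ}
    (hL : 0 < L) (hs : s ∈ Ioo (0 : ℝ) 1)
    (hT : ∀ t ∈ Icc (-L) L, HasDerivAt T (T' t) t) (hK : ∀ t ∈ Icc (-L) L, K ≤ T' t)
    (hG : ∀ t ∈ Icc (-L) L, HasDerivAt G (-T t * G t) t) (hG₀ : ∀ t ∈ Icc (-L) L, 0 < G t)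
    (hd1 : ∀ t ∈ Icc (-L) L, HasDerivAt φ (φ' t) t)
    (hd2 : ∀ t ∈ Icc (-L) L, HasDerivAt φ' (φ'' t) t)
    (hc2 : ContinuousOn φ'' (Icc (-L) L))
    (hODE : ∀ t ∈ Icc (-L) L, φ'' t - T t * φ' t + lam * φ t = 0)
    (hNeu₁ : φ' (-L) = 0) (hNeu₂ : φ' L = 0) (hmono : ∀ t ∈ Icc (-L) L, 0 ≤ φ' t)
    (hnonconst : ¬ ∀ t ∈ Icc (-L) L, φ t = φ (-L)) :
    4 * s * (1 - s) * (π / (2 * L)) ^ 2 + s * K ≤ lam := by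
  by_contra! hlam
  have hφ'₀ :=
    eqOn_deriv_zero_of_lt hL hs hT hK hG hG₀ hd1 hd2 hc2 hODE hNeu₁ hNeu₂ hmono hlam
  refine hnonconst (constant_of_has_deriv_right_zero
    (fun t ht => (hd1 t ht).continuousAt.continuousWithinAt) fun t ht => ?_)
  have hφ't : φ' t = 0 := by
    rcases eq_or_lt_of_le ht.1 with rfl | hlt
    · exact hNeu₁
    · exact hφ'₀ ⟨hlt, ht.2⟩
  simpa [hφ't] using (hd1 t (Ico_subset_Icc_self ht)).hasDerivWithinAt (s := Ici t)

theorem le_eigenvalue_of_tan_drift {L c₁ c₂ r₁ r₂ lam s : ℝ} {φ φ' φ'' : ℝ → ℝ}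
    (hL : 0 < L) (hs : s ∈ Ioo (0 : ℝ) 1) (hc₁ : 0 ≤ c₁) (hc₂ : 0 ≤ c₂)
    (hr₁ : 0 ≤ r₁) (hr₂ : 0 ≤ r₂) (hL₁ : c₁ * L < π / 2)
    (hL₂ : c₂ * L < π / 2)
    (hd1 : ∀ t ∈ Icc (-L) L, HasDerivAt φ (φ' t) t)
    (hd2 : ∀ t ∈ Icc (-L) L, HasDerivAt φ' (φ'' t) t)
    (hc2 : ContinuousOn φ'' (Icc (-L) L))
    (hODE : ∀ t ∈ Icc (-L) L,
      φ'' t - (r₁ * c₁ * tan (c₁ * t) + r₂ * c₂ * tan (c₂ * t)) * φ' t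
        + lam * φ t = 0)
    (hNeu₁ : φ' (-L) = 0) (hNeu₂ : φ' L = 0) (hmono : ∀ t ∈ Icc (-L) L, 0 ≤ φ' t)
    (hnonconst : ¬ ∀ t ∈ Icc (-L) L, φ t = φ (-L)) :
    4 * s * (1 - s) * (π / (2 * L)) ^ 2 + s * (r₁ * c₁ ^ 2 + r₂ * c₂ ^ 2) ≤ lam := by
  have hcos {c : ℝ} (hc : 0 ≤ c) (hcL : c * L < π / 2) :
      ∀ t ∈ Icc (-L) L, 0 < cos (c * t) :=
    fun t ht => cos_mul_pos hc ((mul_le_mul_of_nonneg_left (abs_le.mpr ht) hc).trans_lt hcL)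
  have hcos₁ := hcos hc₁ hL₁
  have hcos₂ := hcos hc₂ hL₂
  refine le_eigenvalue_of_neumann_of_monotone
    (G := fun t => cos (c₁ * t) ^ r₁ * cos (c₂ * t) ^ r₂)
    (T' := fun t => r₁ * c₁ * (c₁ * (1 + tan (c₁ * t) ^ 2))
      + r₂ * c₂ * (c₂ * (1 + tan (c₂ * t) ^ 2)))
    hL hs (fun t ht => ?_) (fun t _ => ?_) (fun t ht => ?_)
    (fun t ht => mul_pos (rpow_pos_of_pos (hcos₁ t ht) _) (rpow_pos_of_pos (hcos₂ t ht) _))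
    hd1 hd2 hc2 hODE hNeu₁ hNeu₂ hmono hnonconst
  · exact ((hasDerivAt_tan_mul (hcos₁ t ht).ne').const_mul _).add
      ((hasDerivAt_tan_mul (hcos₂ t ht).ne').const_mul _)
  · have h₁ := mul_nonneg (mul_nonneg hr₁ (sq_nonneg c₁)) (sq_nonneg (tan (c₁ * t)))
    have h₂ := mul_nonneg (mul_nonneg hr₂ (sq_nonneg c₂)) (sq_nonneg (tan (c₂ * t)))
    linarith
  · exact (((hasDerivAt_cos_mul (hcos₁ t ht).ne').rpow_const_of_eq_mul r₁
      (hcos₁ t ht).ne').mul ((hasDerivAt_cos_mul (hcos₂ t ht).ne').rpow_const_of_eq_mul r₂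
        (hcos₂ t ht).ne')).congr_deriv (by ring)

theorem prop_5_1_general (a b m : ℕ) (hm : 1 ≤ m)
    (κ₁ κ₂ : ℝ) (hκ₁ : 0 ≤ κ₁) (hκ₂ : 0 ≤ κ₂) (D : ℝ) (hD : 0 < D)
    (hD₂ : Real.sqrt κ₂ * (D / 2) < Real.pi / 2)
    (hD₁ : 2 * Real.sqrt κ₁ * (D / 2) < Real.pi / 2)
    (lam : ℝ) (φ φ' φ'' : ℝ → ℝ)
    (hd1 : ∀ t ∈ Icc (-(D / 2)) (D / 2), HasDerivAt φ (φ' t) t)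
    (hd2 : ∀ t ∈ Icc (-(D / 2)) (D / 2), HasDerivAt φ' (φ'' t) t)
    (hc2 : ContinuousOn φ'' (Icc (-(D / 2)) (D / 2)))
    (hODE : ∀ t ∈ Icc (-(D / 2)) (D / 2),
      φ'' t - (2 * a * ((m : ℝ) - 1) * Real.sqrt κ₂ * Real.tan (Real.sqrt κ₂ * t)
          + 2 * b * Real.sqrt κ₁ * Real.tan (2 * Real.sqrt κ₁ * t)) * φ' t
        + lam * φ t = 0)
    (hNeu₁ : φ' (-(D / 2)) = 0) (hNeu₂ : φ' (D / 2) = 0)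
    (hmono : ∀ t ∈ Icc (-(D / 2)) (D / 2), 0 ≤ φ' t)
    (hnonconst : ¬ ∀ t ∈ Icc (-(D / 2)) (D / 2), φ t = φ (-(D / 2))) :
    ∀ s ∈ Ioo (0 : ℝ) 1,
      4 * s * (1 - s) * Real.pi ^ 2 / D ^ 2
        + s * (2 * a * ((m : ℝ) - 1) * κ₂ + 4 * b * κ₁) ≤ lam := by
  intro s hs
  have hr : (0 : ℝ) ≤ 2 * a * ((m : ℝ) - 1) :=
    mul_nonneg (by positivity) (sub_nonneg.mpr (by exact_mod_cast hm))
  have key := le_eigenvalue_of_tan_drift (lam := lam) (r₁ := b) (c₁ := 2 * √κ₁)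
    (by positivity) hs (by positivity) (sqrt_nonneg κ₂) (Nat.cast_nonneg b) hr hD₁ hD₂
    hd1 hd2 hc2
    (fun t ht => by linear_combination hODE t ht) hNeu₁ hNeu₂ hmono hnonconst
  rw [mul_pow, sq_sqrt hκ₁, sq_sqrt hκ₂] at key
  convert key using 2
  · field_simp
  · ring

/-- **Proposition 5.1.** Explicit lower bound for the first nonzero Neumann eigenvalue
of the one-dimensional problem
`φ'' - (2a(m-1)√κ₂ tan(√κ₂ t) + 2b√κ₁ tan(2√κ₁ t)) φ' + λ φ = 0`
on `[-D/2, D/2]`. -/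
theorem prop_5_1 (a b m : ℕ) (ha : 0 < a) (hb : 0 < b) (hm : 1 ≤ m)
    (κ₁ κ₂ : ℝ) (hκ₁ : 0 ≤ κ₁) (hκ₂ : 0 ≤ κ₂) (D : ℝ) (hD : 0 < D)
    (hD₂ : Real.sqrt κ₂ * (D / 2) < Real.pi / 2)
    (hD₁ : 2 * Real.sqrt κ₁ * (D / 2) < Real.pi / 2)
    (lam : ℝ) (φ φ' φ'' : ℝ → ℝ)
    (hd1 : ∀ t ∈ Icc (-(D / 2)) (D / 2), HasDerivAt φ (φ' t) t)
    (hd2 : ∀ t ∈ Icc (-(D / 2)) (D / 2), HasDerivAt φ' (φ'' t) t)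
    (hc2 : ContinuousOn φ'' (Icc (-(D / 2)) (D / 2)))
    (hODE : ∀ t ∈ Icc (-(D / 2)) (D / 2),
      φ'' t - (2 * a * ((m : ℝ) - 1) * Real.sqrt κ₂ * Real.tan (Real.sqrt κ₂ * t)
          + 2 * b * Real.sqrt κ₁ * Real.tan (2 * Real.sqrt κ₁ * t)) * φ' t
        + lam * φ t = 0)
    (hNeu₁ : φ' (-(D / 2)) = 0) (hNeu₂ : φ' (D / 2) = 0)
    (hmono : ∀ t ∈ Icc (-(D / 2)) (D / 2), 0 ≤ φ' t)
    (hnonconst : ¬ ∀ t ∈ Icc (-(D / 2)) (D / 2), φ t = φ (-(D / 2))) :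
    ∀ s ∈ Ioo (0 : ℝ) 1,
      4 * s * (1 - s) * Real.pi ^ 2 / D ^ 2
        + s * (2 * a * ((m : ℝ) - 1) * κ₂ + 4 * b * κ₁) ≤ lam :=
  prop_5_1_general a b m hm κ₁ κ₂ hκ₁ hκ₂ D hD hD₂ hD₁ lam φ φ' φ'' hd1 hd2 hc2 hODE hNeu₁ hNeu₂
    hmono hnonconst
end

section
/- Let $m \geq 1$ be an integer, $\kappa_1,\kappa_2 \geq 0$ real numbers, and $D>0$ with $\sqrt{\kappa_2}\,D/2 < \pi/2$ and $2\sqrt{\kappa_1}\,D/2 < \pi/2$. Suppose $\lambda \in \mathbb{R}$ and $\varphi$ is a twice continuously differentiable real-valued function on $[-D/2,D/2]$ satisfying $\varphi''(t)-\big(2(m-1)T_{\kappa_2}(t)+T_{4\kappa_1}(t)\big)\varphi'(t)=-\lambda\varphi(t)$ for all $t\in[-D/2,D/2]$, with Neumann boundary conditions $\varphi'(-D/2)=\varphi'(D/2)=0$, and such that $\varphi' \geq 0$ on $[-D/2,D/2]$ and $\varphi$ is not constant. Then for every $s\in(0,1)$, $\lambda \geq 4s(1-s)\frac{\pi^2}{D^2}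 + 2s(m-1)\kappa_2 + 4s\kappa_1$. -/
/-!
The derivative `u = φ'` is nonnegative, vanishes at `±D/2` and satisfies `u' = A u - λ φ` with
drift `A = 2(m-1) T_{κ₂} + T_{4κ₁}`; since `T_κ' = κ + T_κ²`, `A' ≥ K = 2(m-1)κ₂ + 4κ₁`.
For `σ ≥ 1` and `v = u^σ`, integrating the derivative of `σ u^{2σ-1} ((σ - 1/2) A u - σ λ φ)`
gives `(2σ-1) ∫ v'² + σ(σ - 1/2) ∫ A' v² = σ² λ ∫ v²`. Wirtinger's inequality
`∫ v'² ≥ (π/D)² ∫ v²` and `A' ≥ K` then give `(2σ-1)(π/D)² + σ(σ - 1/2) K ≤ σ² λ`,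
and `σ` is chosen according to `s`.
-/

open Real Set

noncomputable def Tk (κ t : ℝ) : ℝ := Real.sqrt κ * Real.tan (Real.sqrt κ * t)

open Filter Topology MeasureTheory intervalIntegral

lemma hasDerivAt_Tk {κ t : ℝ} (hκ : 0 ≤ κ) (hcos : cos (√κ * t) ≠ 0) :
    HasDerivAt (Tk κ) (κ + Tk κ t ^ 2) t := by
  have h := ((hasDerivAt_tan hcos).comp t ((hasDerivAt_id t).const_mul √κ)).const_mul √κ
  refine h.congr_deriv ?_
  simp only [Tk, tan_eq_sin_div_cos, mul_one]
  field_simp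
  rw [sq_sqrt hκ]
  linear_combination (-κ) * sin_sq_add_cos_sq (√κ * t)

lemma hasDerivAt_Tk_of_mem_Icc {κ L t : ℝ} (hκ : 0 ≤ κ) (hL : √κ * L < π / 2)
    (ht : t ∈ Icc (-L) L) : HasDerivAt (Tk κ) (κ + Tk κ t ^ 2) t := by
  refine hasDerivAt_Tk hκ (cos_pos_of_mem_Ioo ⟨?_, ?_⟩).ne'
  · nlinarith [mul_le_mul_of_nonneg_left ht.1 (sqrt_nonneg κ)]
  · nlinarith [mul_le_mul_of_nonneg_left ht.2 (sqrt_nonneg κ)]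

/-- The Riccati substitution: with `ρ = γ tan(γ (t - (a+b)/2))` one has `ρ' = γ² + ρ²`, hence
`(w' + ρ w)² = w'² - γ² w² + (ρ w²)'`, and `ρ w²` vanishes at both ends. -/
theorem sq_mul_integral_sq_le_integral_sq_deriv {a b γ : ℝ} {w w' : ℝ → ℝ} (hab : a ≤ b)
    (hγ : 0 ≤ γ) (hγab : γ * (b - a) < π) (hw : ContinuousOn w (Icc a b))
    (hderiv : ∀ t ∈ Ioo a b, HasDerivAt w (w' t) t) (hw' : ContinuousOn w' (Icc a b))
    (ha : w a = 0) (hb : w b = 0) :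
    γ ^ 2 * ∫ t in a..b, w t ^ 2 ≤ ∫ t in a..b, w' t ^ 2 := by
  set ρ : ℝ → ℝ := fun t => Tk (γ ^ 2) (t - (a + b) / 2)
  have hρ : ∀ t ∈ Icc a b, HasDerivAt ρ (γ ^ 2 + ρ t ^ 2) t := fun t ht =>
    (hasDerivAt_Tk_of_mem_Icc (L := (b - a) / 2) (sq_nonneg γ)
      (by rw [sqrt_sq hγ]; linarith) ⟨by linarith [ht.1], by linarith [ht.2]⟩).comp_sub_const t _
  have hρc : ContinuousOn ρ (Icc a b) := HasDerivAt.continuousOn hρ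
  have hint : ∀ f : ℝ → ℝ, ContinuousOn f (Icc a b) → IntervalIntegrable f volume a b :=
    fun f hf => hf.intervalIntegrable_of_Icc hab
  have hH : ∀ t ∈ Ioo a b, HasDerivAt (fun t => ρ t * w t ^ 2)
      ((w' t + ρ t * w t) ^ 2 - w' t ^ 2 + γ ^ 2 * w t ^ 2) t := fun t ht =>
    ((hρ t (Ioo_subset_Icc_self ht)).mul ((hderiv t ht).pow 2)).congr_deriv
      (by simp only [Pi.pow_apply]; ring)
  have hFTC := integral_eq_sub_of_hasDerivAt_of_le hab (hρc.mul (hw.pow 2)) hH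
    (hint _ (by fun_prop))
  rw [integral_add (hint _ (by fun_prop)) (hint _ (by fun_prop)),
    integral_sub (hint _ (by fun_prop)) (hint _ (by fun_prop)),
    intervalIntegral.integral_const_mul] at hFTC
  simp only [Pi.mul_apply, Pi.pow_apply, ha, hb] at hFTC
  have hsq : 0 ≤ ∫ t in a..b, (w' t + ρ t * w t) ^ 2 := integral_nonneg hab fun t _ => sq_nonneg _
  linarith

theorem pi_div_sq_mul_integral_sq_le_integral_sq_deriv {a b : ℝ} {w w' : ℝ → ℝ} (hab : a < b)
    (hw : ContinuousOn w (Icc a b)) (hderiv : ∀ t ∈ Ioo a b, HasDerivAt w (w' t) t)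
    (hw' : ContinuousOn w' (Icc a b)) (ha : w a = 0) (hb : w b = 0) :
    (π / (b - a)) ^ 2 * ∫ t in a..b, w t ^ 2 ≤ ∫ t in a..b, w' t ^ 2 := by
  have hba : 0 < b - a := sub_pos.2 hab
  have hlim : Tendsto (fun γ : ℝ => γ ^ 2 * ∫ t in a..b, w t ^ 2) (𝓝[<] (π / (b - a)))
      (𝓝 ((π / (b - a)) ^ 2 * ∫ t in a..b, w t ^ 2)) :=
    ((continuous_pow 2).mul continuous_const).continuousAt.tendsto.mono_left nhdsWithin_le_nhds
  refine le_of_tendsto hlim ?_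
  filter_upwards [Ioo_mem_nhdsLT (div_pos pi_pos hba)] with γ hγ
  exact sq_mul_integral_sq_le_integral_sq_deriv hab.le hγ.1.le
    ((lt_div_iff₀ hba).1 hγ.2) hw hderiv hw' ha hb

theorem energy_identity {a b lam σ : ℝ} {φ u u' A A' : ℝ → ℝ} (hab : a ≤ b) (hσ : 1 ≤ σ)
    (hφ : ∀ t ∈ Icc a b, HasDerivAt φ (u t) t) (hu : ∀ t ∈ Icc a b, HasDerivAt u (u' t) t)
    (hu' : ContinuousOn u' (Icc a b)) (hA : ∀ t ∈ Icc a b, HasDerivAt A (A' t) t)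
    (hA' : ContinuousOn A' (Icc a b)) (hode : ∀ t ∈ Icc a b, u' t = A t * u t - lam * φ t)
    (hu0 : ∀ t ∈ Icc a b, 0 ≤ u t) (ha : u a = 0) (hb : u b = 0) :
    (2 * σ - 1) * (∫ t in a..b, (σ * u t ^ (σ - 1) * u' t) ^ 2)
      + σ * (σ - 1 / 2) * (∫ t in a..b, A' t * (u t ^ σ) ^ 2)
      = σ ^ 2 * lam * ∫ t in a..b, (u t ^ σ) ^ 2 := by
  have huc : ContinuousOn u (Icc a b) := HasDerivAt.continuousOn hu
  have hv : ContinuousOn (fun t => u t ^ σ) (Icc a b) :=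
    huc.rpow_const fun _ _ => Or.inr (by linarith)
  have hv' : ContinuousOn (fun t => u t ^ (σ - 1)) (Icc a b) :=
    huc.rpow_const fun _ _ => Or.inr (by linarith)
  have hint : ∀ f : ℝ → ℝ, ContinuousOn f (Icc a b) → IntervalIntegrable f volume a b :=
    fun f hf => hf.intervalIntegrable_of_Icc hab
  have hG : ∀ t ∈ Icc a b, HasDerivAt
      (fun t => σ * (u t ^ (2 * σ - 1) * ((σ - 1 / 2) * (A t * u t) - σ * lam * φ t)))
      ((2 * σ - 1) * (σ * u t ^ (σ - 1) * u' t) ^ 2 + σ * (σ - 1 / 2) * (A' t * (u t ^ σ) ^ 2)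
        - σ ^ 2 * lam * (u t ^ σ) ^ 2) t := by
    intro t ht
    have hx := hu0 t ht
    have h1 : u t ^ σ = u t ^ (σ - 1) * u t := by
      rw [← rpow_add_one' hx (by linarith)]; ring_nf
    have h2 : u t ^ (2 * σ - 1 - 1) = (u t ^ (σ - 1)) ^ 2 := by
      rw [← rpow_natCast, ← rpow_mul hx]; ring_nf
    have h3 : u t ^ (2 * σ - 1) = (u t ^ (σ - 1)) ^ 2 * u t := by
      rw [← h2, ← rpow_add_one' hx (by linarith)]; ring_nf
    refine ((((hu t ht).rpow_const (p := 2 * σ - 1) (Or.inr (by linarith))).mul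
      ((((hA t ht).mul (hu t ht)).const_mul (σ - 1 / 2)).sub
        ((hφ t ht).const_mul (σ * lam)))).const_mul σ).congr_deriv ?_
    simp only [Pi.sub_apply, Pi.mul_apply]
    rw [h1, h2, h3]
    linear_combination (-σ ^ 2 * (2 * σ - 1) * u' t * (u t ^ (σ - 1)) ^ 2) * hode t ht
  have hFTC := integral_eq_sub_of_hasDerivAt (by rwa [uIcc_of_le hab]) (hint _ (by fun_prop))
  rw [integral_sub (hint _ (by fun_prop)) (hint _ (by fun_prop)),
    integral_add (hint _ (by fun_prop)) (hint _ (by fun_prop)),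
    intervalIntegral.integral_const_mul, intervalIntegral.integral_const_mul,
    intervalIntegral.integral_const_mul, ha, hb, zero_rpow (by linarith)] at hFTC
  linarith

theorem sq_mul_eigenvalue_lower_bound {a b lam σ K : ℝ} {φ u u' A A' : ℝ → ℝ} (hab : a < b)
    (hσ : 1 ≤ σ) (hφ : ∀ t ∈ Icc a b, HasDerivAt φ (u t) t)
    (hu : ∀ t ∈ Icc a b, HasDerivAt u (u' t) t) (hu' : ContinuousOn u' (Icc a b))
    (hA : ∀ t ∈ Icc a b, HasDerivAt A (A' t) t) (hA' : ContinuousOn A' (Icc a b))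
    (hode : ∀ t ∈ Icc a b, u' t = A t * u t - lam * φ t) (hK : ∀ t ∈ Icc a b, K ≤ A' t)
    (hu0 : ∀ t ∈ Icc a b, 0 ≤ u t) (ha : u a = 0) (hb : u b = 0)
    (hne : ∃ t ∈ Icc a b, u t ≠ 0) :
    (2 * σ - 1) * (π / (b - a)) ^ 2 + σ * (σ - 1 / 2) * K ≤ σ ^ 2 * lam := by
  have huc : ContinuousOn u (Icc a b) := HasDerivAt.continuousOn hu
  have hv : ContinuousOn (fun t => u t ^ σ) (Icc a b) :=
    huc.rpow_const fun _ _ => Or.inr (by linarith)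
  have hv' : ContinuousOn (fun t => u t ^ (σ - 1)) (Icc a b) :=
    huc.rpow_const fun _ _ => Or.inr (by linarith)
  have hint : ∀ f : ℝ → ℝ, ContinuousOn f (Icc a b) → IntervalIntegrable f volume a b :=
    fun f hf => hf.intervalIntegrable_of_Icc hab.le
  have hwirt := pi_div_sq_mul_integral_sq_le_integral_sq_deriv hab hv
    (w' := fun t => σ * u t ^ (σ - 1) * u' t)
    (fun t ht => ((hu t (Ioo_subset_Icc_self ht)).rpow_const (Or.inr hσ)).congr_deriv (by ring))
    (by fun_prop) (by simp [ha, zero_rpow (by linarith : σ ≠ 0)])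
    (by simp [hb, zero_rpow (by linarith : σ ≠ 0)])
  have hdrift : K * ∫ t in a..b, (u t ^ σ) ^ 2 ≤ ∫ t in a..b, A' t * (u t ^ σ) ^ 2 := by
    rw [← intervalIntegral.integral_const_mul]
    exact integral_mono_on hab.le (hint _ (by fun_prop)) (hint _ (by fun_prop))
      fun t ht => mul_le_mul_of_nonneg_right (hK t ht) (sq_nonneg _)
  have hpos : 0 < ∫ t in a..b, (u t ^ σ) ^ 2 := by
    obtain ⟨t, ht, hut⟩ := hne
    refine integral_pos hab (by fun_prop) (fun _ _ => sq_nonneg _) ⟨t, ht, ?_⟩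
    exact pow_pos (rpow_pos_of_pos ((hu0 t ht).lt_of_ne' hut) σ) 2
  have henergy := energy_identity hab.le hσ hφ hu hu' hA hA' hode hu0 ha hb
  refine le_of_mul_le_mul_right ?_ hpos
  nlinarith [mul_le_mul_of_nonneg_left hwirt (by linarith : 0 ≤ 2 * σ - 1),
    mul_le_mul_of_nonneg_left hdrift (by nlinarith : 0 ≤ σ * (σ - 1 / 2))]

/-- The exponent `σ = 1 / (2(1 - s))` turns the bound into the claimed one for `s ≥ 1/2`;
for `s < 1/2` the claimed bound is below its value at `s = 1/2`. -/
theorem le_of_forall_one_le_sq_mul {X K lam s : ℝ} (hX : 0 ≤ X) (hK : 0 ≤ K)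
    (h : ∀ σ : ℝ, 1 ≤ σ → (2 * σ - 1) * X + σ * (σ - 1 / 2) * K ≤ σ ^ 2 * lam)
    (hs : s ∈ Ioo (0 : ℝ) 1) :
    4 * s * (1 - s) * X + s * K ≤ lam := by
  have hhalf : ∀ s : ℝ, 1 / 2 ≤ s → s < 1 → 4 * s * (1 - s) * X + s * K ≤ lam := by
    intro s hs hs1
    have h1s : 0 < 1 - s := by linarith
    have hσ := h (1 / (2 * (1 - s))) (by rw [le_div_iff₀ (by linarith)]; linarith)
    have hid : (2 * (1 / (2 * (1 - s))) - 1) * X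
        + 1 / (2 * (1 - s)) * (1 / (2 * (1 - s)) - 1 / 2) * K
        = (1 / (2 * (1 - s))) ^ 2 * (4 * s * (1 - s) * X + s * K) := by
      field_simp
      ring
    rw [hid] at hσ
    exact le_of_mul_le_mul_left hσ (by positivity)
  rcases le_or_gt (1 / 2) s with hs2 | hs2
  · exact hhalf s hs2 hs.2
  · calc 4 * s * (1 - s) * X + s * K ≤ 4 * (1 / 2) * (1 - 1 / 2) * X + 1 / 2 * K := by
          nlinarith [mul_nonneg (sq_nonneg (1 - 2 * s)) hX, hs.1]
      _ ≤ lam := hhalf (1 / 2) le_rfl (by norm_num)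

/-- **Proposition 1.1.** Explicit lower bound for the one-dimensional comparison
eigenvalue arising in the Kähler setting: any nonconstant monotone Neumann
eigenfunction of `φ'' - (2(m-1)T_{κ₂} + T_{4κ₁}) φ' = -λ φ` on `[-D/2, D/2]`
has eigenvalue `λ ≥ 4s(1-s)π²/D² + 2s(m-1)κ₂ + 4sκ₁` for every `s ∈ (0,1)`. -/
theorem prop_1_1 (m : ℕ) (hm : 1 ≤ m)
    (κ₁ κ₂ : ℝ) (hκ₁ : 0 ≤ κ₁) (hκ₂ : 0 ≤ κ₂) (D : ℝ) (hD : 0 < D)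
    (hD₂ : Real.sqrt κ₂ * (D / 2) < Real.pi / 2)
    (hD₁ : 2 * Real.sqrt κ₁ * (D / 2) < Real.pi / 2)
    (lam : ℝ) (φ φ' φ'' : ℝ → ℝ)
    (hd1 : ∀ t ∈ Icc (-(D / 2)) (D / 2), HasDerivAt φ (φ' t) t)
    (hd2 : ∀ t ∈ Icc (-(D / 2)) (D / 2), HasDerivAt φ' (φ'' t) t)
    (hc2 : ContinuousOn φ'' (Icc (-(D / 2)) (D / 2)))
    (hODE : ∀ t ∈ Icc (-(D / 2)) (D / 2),
      φ'' t - (2 * ((m : ℝ) - 1) * Tk κ₂ t + Tk (4 * κ₁) t) * φ' t = -lam * φ t)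
    (hNeu₁ : φ' (-(D / 2)) = 0) (hNeu₂ : φ' (D / 2) = 0)
    (hmono : ∀ t ∈ Icc (-(D / 2)) (D / 2), 0 ≤ φ' t)
    (hnonconst : ¬ ∀ t ∈ Icc (-(D / 2)) (D / 2), φ t = φ (-(D / 2))) :
    ∀ s ∈ Ioo (0 : ℝ) 1,
      4 * s * (1 - s) * Real.pi ^ 2 / D ^ 2
        + 2 * s * ((m : ℝ) - 1) * κ₂ + 4 * s * κ₁ ≤ lam := by
  intro s hs
  set L := D / 2
  have hm₁ : (0 : ℝ) ≤ (m : ℝ) - 1 := sub_nonneg.2 (by exact_mod_cast hm)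
  have hT₂ : ∀ t ∈ Icc (-L) L, HasDerivAt (Tk κ₂) (κ₂ + Tk κ₂ t ^ 2) t :=
    fun t ht => hasDerivAt_Tk_of_mem_Icc hκ₂ hD₂ ht
  have hT₁ : ∀ t ∈ Icc (-L) L, HasDerivAt (Tk (4 * κ₁)) (4 * κ₁ + Tk (4 * κ₁) t ^ 2) t := by
    have h4 : √(4 * κ₁) = 2 * √κ₁ := by
      rw [sqrt_mul (by norm_num), show (4 : ℝ) = 2 ^ 2 by norm_num, sqrt_sq (by norm_num)]
    exact fun t ht => hasDerivAt_Tk_of_mem_Icc (by positivity) (by rwa [h4]) ht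
  have hc₂ := HasDerivAt.continuousOn hT₂
  have hc₁ := HasDerivAt.continuousOn hT₁
  have hne : ∃ t ∈ Icc (-L) L, φ' t ≠ 0 := by
    by_contra! h
    refine hnonconst (constant_of_has_deriv_right_zero (HasDerivAt.continuousOn hd1) ?_)
    intro t ht
    simpa only [h t (Ico_subset_Icc_self ht)] using
      (hd1 t (Ico_subset_Icc_self ht)).hasDerivWithinAt
  have hbound (σ : ℝ) (hσ : 1 ≤ σ) : (2 * σ - 1) * (π / D) ^ 2
      + σ * (σ - 1 / 2) * (2 * ((m : ℝ) - 1) * κ₂ + 4 * κ₁) ≤ σ ^ 2 * lam := by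
    have hLD : L - -L = D := by ring
    simpa only [hLD] using sq_mul_eigenvalue_lower_bound (by linarith : -L < L) hσ hd1 hd2 hc2
      (A := fun t => 2 * ((m : ℝ) - 1) * Tk κ₂ t + Tk (4 * κ₁) t)
      (fun t ht => ((hT₂ t ht).const_mul (2 * ((m : ℝ) - 1))).add (hT₁ t ht)) (by fun_prop)
      (fun t ht => by linarith [hODE t ht])
      (fun t ht => by nlinarith [sq_nonneg (Tk κ₂ t), sq_nonneg (Tk (4 * κ₁) t)])
      hmono hNeu₁ hNeu₂ hne
  have := le_of_forall_one_le_sq_mul (sq_nonneg _) (by positivity) hbound hs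
  convert this using 1
  ring
end

section
/- Let $D>0$ and let $\gamma > 1$ be a real number. Suppose $y$ is a twice continuously differentiable real-valued function on $[-D/2,D/2]$ with $y > 0$ on $(-D/2,D/2)$ and $y(-D/2)=y(D/2)=0$. Then $\int_{-D/2}^{D/2} y(t)^{\gamma-1} y''(t)\, dt \leq -\frac{4(\gamma-1)}{\gamma^2}\cdot\frac{\pi^2}{D^2}\int_{-D/2}^{D/2} y(t)^{\gamma}\, dt$. -/
open Real Set intervalIntegral Filter Topology

/-!
Instead of Wirtinger's inequality for `y ^ (γ / 2)`, compare `y` with the first Dirichlet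
eigenfunction `w(t) = cos (π t / D)`, `w'' = -μ w`, `μ = (π / D)²`, through the Picone-type flux
`H = -y^{γ-1} y' + K (w'/w) y^γ`, `K = 4(γ-1)/γ²`. Since `q = w'/w` solves the Riccati equation
`q' = -μ - q²`, one finds
`H' = -y^{γ-1} y'' - K μ y^γ - ((γ-1) y^{γ-2} / γ²) (γ y' - 2 q y)²`.
Both `y` and `w` vanish to first order at the endpoints, so `y/w` stays bounded and `H → 0` there;
integrating `H' ≤ -y^{γ-1} y'' - K μ y^γ` over the interval gives the estimate.
-/

lemma tendsto_div_of_hasDerivAt_of_eq_zero {f g : ℝ → ℝ} {f' g' c : ℝ}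
    (hf : HasDerivAt f f' c) (hg : HasDerivAt g g' c) (hfc : f c = 0) (hgc : g c = 0)
    (hg' : g' ≠ 0) : Tendsto (fun t => f t / g t) (𝓝[≠] c) (𝓝 (f' / g')) := by
  refine ((hasDerivAt_iff_tendsto_slope.1 hf).div
    (hasDerivAt_iff_tendsto_slope.1 hg) hg').congr' ?_
  filter_upwards [self_mem_nhdsWithin] with t ht
  change slope f c t / slope g c t = f t / g t
  rw [slope_def_field, slope_def_field, hfc, hgc, sub_zero, sub_zero,
    div_div_div_cancel_right₀ (sub_ne_zero.2 ht)]

lemma rpow_eq_rpow_sub_one_mul (x : ℝ) {p : ℝ} (hp : p ≠ 0) : x ^ p = x ^ (p - 1) * x := by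
  rcases eq_or_ne x 0 with rfl | hx
  · simp [zero_rpow hp]
  · rw [← rpow_add_one hx]; norm_num

lemma hasDerivAt_div_of_hasDerivAt_eq_neg_mul {w w' : ℝ → ℝ} {μ t : ℝ}
    (hw : HasDerivAt w (w' t) t) (hw' : HasDerivAt w' (-μ * w t) t) (ht : w t ≠ 0) :
    HasDerivAt (fun s => w' s / w s) (-μ - (w' t / w t) ^ 2) t :=
  (hw'.div hw ht).congr_deriv (by field_simp)

lemma hasDerivAt_cos_const_mul (k t : ℝ) :
    HasDerivAt (fun s => cos (k * s)) (-(k * sin (k * t))) t :=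
  ((hasDerivAt_id' t).const_mul k).cos.congr_deriv (by ring)

lemma hasDerivAt_neg_const_mul_sin_const_mul (k t : ℝ) :
    HasDerivAt (fun s => -(k * sin (k * s))) (-k ^ 2 * cos (k * t)) t :=
  (((hasDerivAt_id' t).const_mul k).sin.const_mul k).neg.congr_deriv (by ring)

noncomputable def piconeFlux (γ : ℝ) (y y' w w' : ℝ → ℝ) (t : ℝ) : ℝ :=
  -(y t ^ (γ - 1) * y' t) + 4 * (γ - 1) / γ ^ 2 * (w' t / w t * y t ^ γ)

section piconeFlux

variable {γ μ : ℝ} {y y' y'' w w' : ℝ → ℝ}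

lemma piconeFlux_of_eq_zero {c : ℝ} (hγ : 1 < γ) (hyc : y c = 0) :
    piconeFlux γ y y' w w' c = 0 := by
  simp [piconeFlux, hyc, zero_rpow (by linarith : γ - 1 ≠ 0), zero_rpow (by linarith : γ ≠ 0)]

lemma exists_hasDerivAt_piconeFlux_le {t : ℝ} (hγ : 1 ≤ γ) (hyt : 0 < y t)
    (hy : HasDerivAt y (y' t) t) (hy' : HasDerivAt y' (y'' t) t)
    (hw : HasDerivAt w (w' t) t) (hw' : HasDerivAt w' (-μ * w t) t) (hwt : w t ≠ 0) :
    ∃ d, HasDerivAt (piconeFlux γ y y' w w') d t ∧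
      d ≤ -(y t ^ (γ - 1) * y'' t) - 4 * (γ - 1) / γ ^ 2 * μ * y t ^ γ := by
  have hA := hy.rpow_const (p := γ - 1) (Or.inl hyt.ne')
  have hB := hy.rpow_const (p := γ) (Or.inl hyt.ne')
  have hq := hasDerivAt_div_of_hasDerivAt_eq_neg_mul hw hw' hwt
  refine ⟨_, ((hA.mul hy').neg).add ((hq.mul hB).const_mul (4 * (γ - 1) / γ ^ 2)), ?_⟩
  set q := w' t / w t
  have e1 : y t ^ (γ - 1) = y t ^ (γ - 1 - 1) * y t := by rw [← rpow_add_one hyt.ne']; ring_nf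
  have e2 : y t ^ γ = y t ^ (γ - 1 - 1) * y t * y t := by
    rw [← e1, ← rpow_add_one hyt.ne']; ring_nf
  have key : -(y t ^ (γ - 1) * y'' t) - 4 * (γ - 1) / γ ^ 2 * μ * y t ^ γ
      - (-(y' t * (γ - 1) * y t ^ (γ - 1 - 1) * y' t + y t ^ (γ - 1) * y'' t)
        + 4 * (γ - 1) / γ ^ 2 * ((-μ - q ^ 2) * y t ^ γ + q * (y' t * γ * y t ^ (γ - 1))))
      = (γ - 1) * y t ^ (γ - 1 - 1) / γ ^ 2 * (γ * y' t - 2 * q * y t) ^ 2 := by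
    rw [e1, e2]
    field_simp
    ring
  have : 0 ≤ (γ - 1) * y t ^ (γ - 1 - 1) / γ ^ 2 * (γ * y' t - 2 * q * y t) ^ 2 := by
    have := rpow_pos_of_pos hyt (γ - 1 - 1)
    have : 0 ≤ γ - 1 := by linarith
    positivity
  linarith

lemma continuousAt_piconeFlux_of_eq_zero {c : ℝ} (hγ : 1 < γ)
    (hy : HasDerivAt y (y' c) c) (hy' : ContinuousAt y' c)
    (hw : HasDerivAt w (w' c) c) (hw' : ContinuousAt w' c)
    (hyc : y c = 0) (hwc : w c = 0) (hw'c : w' c ≠ 0) :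
    ContinuousAt (piconeFlux γ y y' w w') c := by
  have hA : Tendsto (fun t => y t ^ (γ - 1)) (𝓝 c) (𝓝 0) := by
    have := (continuousAt_rpow_const (y c) (γ - 1) (Or.inr (by linarith))).tendsto.comp
      hy.continuousAt.tendsto
    rwa [Function.comp_def, hyc, zero_rpow (by linarith)] at this
  have hdiv := tendsto_div_of_hasDerivAt_of_eq_zero hy hw hyc hwc hw'c
  have hlim := ((hA.mul hy'.tendsto).neg.mono_left nhdsWithin_le_nhds).add
    ((((hw'.tendsto.mul hA).mono_left nhdsWithin_le_nhds).mul hdiv).const_mul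
      (4 * (γ - 1) / γ ^ 2))
  rw [zero_mul, neg_zero, mul_zero, zero_mul, mul_zero, zero_add] at hlim
  rw [← continuousWithinAt_compl_self, ContinuousWithinAt, piconeFlux_of_eq_zero hγ hyc]
  refine hlim.congr fun t => ?_
  rw [piconeFlux, rpow_eq_rpow_sub_one_mul (y t) (by linarith : γ ≠ 0)]
  ring

end piconeFlux

theorem integral_rpow_sub_one_mul_le_of_dirichlet_eigenfunction {a b γ μ : ℝ}
    {y y' y'' w w' : ℝ → ℝ} (hab : a ≤ b) (hγ : 1 < γ)
    (hy : ∀ t ∈ Icc a b, HasDerivAt y (y' t) t) (hy' : ∀ t ∈ Icc a b, HasDerivAt y' (y'' t) t)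
    (hy'' : ContinuousOn y'' (Icc a b)) (hpos : ∀ t ∈ Ioo a b, 0 < y t)
    (hya : y a = 0) (hyb : y b = 0)
    (hw : ∀ t ∈ Icc a b, HasDerivAt w (w' t) t) (hw' : ∀ t ∈ Icc a b, HasDerivAt w' (-μ * w t) t)
    (hw0 : ∀ t ∈ Ioo a b, w t ≠ 0) (hwa : w a = 0) (hwb : w b = 0)
    (hw'a : w' a ≠ 0) (hw'b : w' b ≠ 0) :
    ∫ t in a..b, y t ^ (γ - 1) * y'' t ≤ -(4 * (γ - 1) / γ ^ 2) * μ * ∫ t in a..b, y t ^ γ := by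
  have hderiv (t : ℝ) (ht : t ∈ Ioo a b) := exists_hasDerivAt_piconeFlux_le hγ.le (hpos t ht)
    (hy t (Ioo_subset_Icc_self ht)) (hy' t (Ioo_subset_Icc_self ht))
    (hw t (Ioo_subset_Icc_self ht)) (hw' t (Ioo_subset_Icc_self ht)) (hw0 t ht)
  have hH : ContinuousOn (piconeFlux γ y y' w w') (Icc a b) := by
    intro t ht
    apply ContinuousAt.continuousWithinAt
    rcases eq_endpoints_or_mem_Ioo_of_mem_Icc ht with rfl | rfl | ht'
    · exact continuousAt_piconeFlux_of_eq_zero hγ (hy t ht) (hy' t ht).continuousAt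
        (hw t ht) (hw' t ht).continuousAt hya hwa hw'a
    · exact continuousAt_piconeFlux_of_eq_zero hγ (hy t ht) (hy' t ht).continuousAt
        (hw t ht) (hw' t ht).continuousAt hyb hwb hw'b
    · obtain ⟨d, hd, -⟩ := hderiv t ht'
      exact hd.continuousAt
  have hyc : ContinuousOn y (Icc a b) := fun t ht => (hy t ht).continuousAt.continuousWithinAt
  have hint₁ : IntervalIntegrable (fun t => y t ^ (γ - 1) * y'' t) MeasureTheory.volume a b :=
    ((hyc.rpow_const fun _ _ => Or.inr (by linarith)).mul hy'').intervalIntegrable_of_Icc hab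
  have hint₂ : IntervalIntegrable (fun t => y t ^ γ) MeasureTheory.volume a b :=
    (hyc.rpow_const fun _ _ => Or.inr (by linarith)).intervalIntegrable_of_Icc hab
  have hmain := sub_le_integral_of_hasDeriv_right_of_le hab hH
    (g' := deriv (piconeFlux γ y y' w w'))
    (φ := fun t => -(y t ^ (γ - 1) * y'' t) - 4 * (γ - 1) / γ ^ 2 * μ * y t ^ γ)
    (fun t ht => by
      obtain ⟨d, hd, -⟩ := hderiv t ht
      exact hd.deriv ▸ hd.hasDerivWithinAt)
    ((intervalIntegrable_iff_integrableOn_Icc_of_le hab).1 (hint₁.neg.sub (hint₂.const_mul _)))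
    (fun t ht => by
      obtain ⟨d, hd, hle⟩ := hderiv t ht
      exact hd.deriv ▸ hle)
  rw [piconeFlux_of_eq_zero hγ hya, piconeFlux_of_eq_zero hγ hyb,
    integral_sub (f := fun t => -(y t ^ (γ - 1) * y'' t)) hint₁.neg (hint₂.const_mul _),
    integral_neg, integral_const_mul] at hmain
  linarith

/-- Inequality (5.6) in the proof of Proposition 5.1: combining integration by
parts with Wirtinger's inequality gives
`∫ y^{γ-1} y'' ≤ -(4(γ-1)/γ²) (π²/D²) ∫ y^γ` on `[-D/2, D/2]`
for `y` vanishing at the endpoints and positive inside. -/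
theorem ibp_wirtinger_estimate (D : ℝ) (hD : 0 < D) (γ : ℝ) (hγ : 1 < γ)
    (y y' y'' : ℝ → ℝ)
    (hd1 : ∀ t ∈ Icc (-(D / 2)) (D / 2), HasDerivAt y (y' t) t)
    (hd2 : ∀ t ∈ Icc (-(D / 2)) (D / 2), HasDerivAt y' (y'' t) t)
    (hc2 : ContinuousOn y'' (Icc (-(D / 2)) (D / 2)))
    (hpos : ∀ t ∈ Ioo (-(D / 2)) (D / 2), 0 < y t)
    (hbd₁ : y (-(D / 2)) = 0) (hbd₂ : y (D / 2) = 0) :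
    (∫ t in (-(D / 2))..(D / 2), y t ^ (γ - 1) * y'' t)
      ≤ -(4 * (γ - 1) / γ ^ 2) * (Real.pi ^ 2 / D ^ 2)
          * ∫ t in (-(D / 2))..(D / 2), y t ^ γ := by
  have hk : 0 < π / D := div_pos pi_pos hD
  have hend : π / D * (D / 2) = π / 2 := by field_simp
  rw [← div_pow]
  refine integral_rpow_sub_one_mul_le_of_dirichlet_eigenfunction (by linarith) hγ hd1 hd2 hc2
    hpos hbd₁ hbd₂ (fun t _ => hasDerivAt_cos_const_mul (π / D) t)
    (fun t _ => hasDerivAt_neg_const_mul_sin_const_mul (π / D) t) (fun t ht => ?_)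
    (by simp [hend]) (by simp [hend]) (by simp [hend, hk.ne']) (by simp [hend, hk.ne'])
  refine (cos_pos_of_mem_Ioo ⟨?_, ?_⟩).ne'
  · simpa [hend] using mul_lt_mul_of_pos_left ht.1 hk
  · simpa [hend] using mul_lt_mul_of_pos_left ht.2 hk
end

section
/- Let $a,b$ be positive integers, $m \geq 1$ an integer, $\kappa_1,\kappa_2 \geq 0$ real numbers, and $D>0$ with $\sqrt{\kappa_2}\,D/2 < \pi/2$ and $2\sqrt{\kappa_1}\,D/2 < \pi/2$. Let $W(t)=2a(m-1)\sqrt{\kappa_2}\tan(\sqrt{\kappa_2}\,t)+2b\sqrt{\kappa_1}\tan(2\sqrt{\kappa_1}\,t)$ and $V(t)=2a(m-1)\kappa_2\sec^2(\sqrt{\kappa_2}\,t)+4b\kappa_1\sec^2(2\sqrt{\kappa_1}\,t)$. Suppose $\lambda \in \mathbb{R}$ and $y$ is a twice continuously differentiable real-valued function on $[-D/2,D/2]$ with $y \geq 0$, $y$ not identically zero, $y(-D/2)=y(D/2)=0$, $y > 0$ on $(-D/2,D/2)$, and $y''(t)-W(t)y'(t)-V(t)y(t)+\lambda y(t)=0$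 on $[-D/2,D/2]$. Then for every real $\gamma \geq 2$, $\lambda \geq \frac{4(\gamma-1)}{\gamma^2}\cdot\frac{\pi^2}{D^2} + \Big(1-\frac{1}{\gamma}\Big)\big(2a(m-1)\kappa_2 + 4b\kappa_1\big)$. -/
/-!
Multiplying the equation by `y ^ (γ - 1)` and integrating by parts (using `W' = V` and the
vanishing of `y` at the endpoints) gives
`λ ∫ y^γ = (γ - 1) ∫ y^(γ-2) y'^2 + (1 - 1/γ) ∫ V y^γ`.
The first integral equals `(4/γ²) ∫ ((y^(γ/2))')²`, which Wirtinger's inequality bounds below by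
`(4/γ²) (π/D)² ∫ y^γ`; the second is at least `V(0) ∫ y^γ` because `sec² ≥ 1`.

Wirtinger's inequality comes from Picone's identity
`u'² - k² u² = (u' - k cot(k(x-a)) u)² + (k cot(k(x-a)) u²)'` with `k = π/(b-a)`; the boundary
term vanishes since `u` grows at most linearly away from the endpoints while `cot` blows up
only like the reciprocal distance.
-/

open Real Set intervalIntegral
open MeasureTheory (volume)

theorem two_div_pi_mul_min_le_sin {s : ℝ} (h₀ : 0 ≤ s) (hπ : s ≤ π) :
    2 / π * min s (π - s) ≤ sin s := by
  rcases le_total s (π / 2) with h | h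
  · exact (mul_le_mul_of_nonneg_left (min_le_left _ _) (by positivity)).trans (mul_le_sin h₀ h)
  · calc 2 / π * min s (π - s) ≤ 2 / π * (π - s) :=
          mul_le_mul_of_nonneg_left (min_le_right _ _) (by positivity)
      _ ≤ sin (π - s) := mul_le_sin (by linarith) (by linarith)
      _ = sin s := sin_pi_sub s

section Wirtinger

variable {a b M : ℝ} {u u' : ℝ → ℝ}

theorem abs_le_mul_min_sub_of_abs_deriv_le (hu : ∀ x ∈ Icc a b, HasDerivAt u (u' x) x)
    (hM : ∀ x ∈ Icc a b, |u' x| ≤ M) (ha : u a = 0) (hb : u b = 0) {x : ℝ} (hx : x ∈ Icc a b) :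
    |u x| ≤ M * min (x - a) (b - x) := by
  have hu_within : ∀ x ∈ Icc a b, HasDerivWithinAt u (u' x) (Icc a b) x :=
    fun x hx => (hu x hx).hasDerivWithinAt
  have hleft := Convex.norm_image_sub_le_of_norm_hasDerivWithin_le hu_within hM (convex_Icc a b)
    (left_mem_Icc.2 (hx.1.trans hx.2)) hx
  have hright := Convex.norm_image_sub_le_of_norm_hasDerivWithin_le hu_within hM (convex_Icc a b)
    hx (right_mem_Icc.2 (hx.1.trans hx.2))
  simp only [ha, hb, sub_zero, zero_sub, norm_neg, Real.norm_eq_abs,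
    abs_of_nonneg (sub_nonneg.2 hx.1), abs_of_nonneg (sub_nonneg.2 hx.2)] at hleft hright
  rw [mul_min_of_nonneg _ _ ((abs_nonneg _).trans (hM x hx))]
  exact le_min hleft hright

/-- The term `(φ'/φ) u²` of Picone's identity for `φ x = sin (k (x - a))`, which solves
`φ'' = -k² φ`. -/
noncomputable def piconeTerm (k a : ℝ) (u : ℝ → ℝ) (x : ℝ) : ℝ :=
  k * cos (k * (x - a)) / sin (k * (x - a)) * u x ^ 2

theorem hasDerivAt_piconeTerm {k x : ℝ} (hu : HasDerivAt u (u' x) x)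
    (hsin : sin (k * (x - a)) ≠ 0) :
    HasDerivAt (piconeTerm k a u) (u' x ^ 2 - k ^ 2 * u x ^ 2
      - (u' x - k * cos (k * (x - a)) / sin (k * (x - a)) * u x) ^ 2) x := by
  have hθ : HasDerivAt (fun x => k * (x - a)) k x := by
    simpa using ((hasDerivAt_id x).sub_const a).const_mul k
  have h := (((hθ.cos).const_mul k).div hθ.sin hsin).mul (hu.pow 2)
  refine h.congr_deriv ?_
  simp only [Pi.div_apply, Pi.pow_apply]
  field_simp
  ring

theorem sin_pi_div_mul_sub_pos {x : ℝ} (hx : x ∈ Ioo a b) : 0 < sin (π / (b - a) * (x - a)) := by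
  have hba : 0 < b - a := sub_pos.2 (hx.1.trans hx.2)
  refine sin_pos_of_pos_of_lt_pi (mul_pos (by positivity) (sub_pos.2 hx.1)) ?_
  rw [div_mul_eq_mul_div, div_lt_iff₀ hba]
  nlinarith [hx.2, pi_pos]

theorem abs_piconeTerm_le (hab : a < b) (hu : ∀ x ∈ Icc a b, HasDerivAt u (u' x) x)
    (hM : ∀ x ∈ Icc a b, |u' x| ≤ M) (ha : u a = 0) (hb : u b = 0) {x : ℝ} (hx : x ∈ Icc a b) :
    |piconeTerm (π / (b - a)) a u x| ≤ π / 2 * M ^ 2 * min (x - a) (b - x) := by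
  set k := π / (b - a) with hk_def
  set d := min (x - a) (b - x)
  have hba : 0 < b - a := sub_pos.2 hab
  have hk : 0 < k := by positivity
  have hud : |u x| ≤ M * d := abs_le_mul_min_sub_of_abs_deriv_le hu hM ha hb hx
  have hsin : 2 / (b - a) * d ≤ sin (k * (x - a)) := by
    have hπ : π - k * (x - a) = k * (b - x) := by rw [hk_def]; field_simp; ring
    have h := two_div_pi_mul_min_le_sin (s := k * (x - a))
      (mul_nonneg hk.le (sub_nonneg.2 hx.1)) (by rw [← sub_nonneg, hπ]; nlinarith [hx.2])
    rw [hπ, ← mul_min_of_nonneg _ _ hk.le] at h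
    calc 2 / (b - a) * d = 2 / π * (k * d) := by rw [hk_def]; field_simp
      _ ≤ _ := h
  have hd₀ : 0 ≤ d := le_min (sub_nonneg.2 hx.1) (sub_nonneg.2 hx.2)
  rcases hd₀.eq_or_lt with hd | hd
  · have hux : u x = 0 := abs_nonpos_iff.1 (by rwa [← hd, mul_zero] at hud)
    simp [piconeTerm, hux, ← hd]
  have hsin_pos : 0 < sin (k * (x - a)) := lt_of_lt_of_le (by positivity) hsin
  have hu_sq : u x ^ 2 ≤ (M * d) ^ 2 := by
    rw [← sq_abs]; exact pow_le_pow_left₀ (abs_nonneg _) hud 2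
  rw [piconeTerm, abs_mul, abs_div, abs_mul, abs_of_pos hk, abs_of_pos hsin_pos,
    abs_sq]
  calc k * |cos (k * (x - a))| / sin (k * (x - a)) * u x ^ 2
      ≤ k * 1 / (2 / (b - a) * d) * (M * d) ^ 2 := by
        gcongr
        exact abs_cos_le_one _
    _ = π / 2 * M ^ 2 * d := by rw [hk_def]; field_simp

theorem continuousOn_piconeTerm (hab : a < b) (hu : ∀ x ∈ Icc a b, HasDerivAt u (u' x) x)
    (hu' : ContinuousOn u' (Icc a b)) (ha : u a = 0) (hb : u b = 0) :
    ContinuousOn (piconeTerm (π / (b - a)) a u) (Icc a b) := by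
  obtain ⟨M, hM⟩ := isCompact_Icc.exists_bound_of_continuousOn hu'
  have hbound {x} (hx : x ∈ Icc a b) := abs_piconeTerm_le hab hu hM ha hb hx
  have h_endpoint : ∀ x₀ ∈ Icc a b, min (x₀ - a) (b - x₀) = 0 →
      ContinuousWithinAt (piconeTerm (π / (b - a)) a u) (Icc a b) x₀ := by
    intro x₀ hx₀ hd
    have hF : piconeTerm (π / (b - a)) a u x₀ = 0 :=
      abs_nonpos_iff.1 (by simpa [hd] using hbound hx₀)
    rw [ContinuousWithinAt, hF]
    refine squeeze_zero_norm' (eventually_nhdsWithin_of_forall fun x hx => hbound hx) ?_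
    have hcont : ContinuousWithinAt (fun x => π / 2 * M ^ 2 * min (x - a) (b - x)) (Icc a b) x₀ :=
      (by fun_prop : Continuous fun x => π / 2 * M ^ 2 * min (x - a) (b - x)).continuousWithinAt
    simpa [hd] using hcont.tendsto
  intro x hx
  rcases eq_endpoints_or_mem_Ioo_of_mem_Icc hx with rfl | rfl | hx'
  · exact h_endpoint x hx (by simp [hab.le])
  · exact h_endpoint x hx (by simp [hab.le])
  · exact (hasDerivAt_piconeTerm (hu x hx)
      (sin_pi_div_mul_sub_pos hx').ne').continuousAt.continuousWithinAt

theorem wirtinger_inequality (hab : a < b) (hu : ∀ x ∈ Icc a b, HasDerivAt u (u' x) x)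
    (hu' : ContinuousOn u' (Icc a b)) (ha : u a = 0) (hb : u b = 0) :
    (π / (b - a)) ^ 2 * ∫ x in a..b, u x ^ 2 ≤ ∫ x in a..b, u' x ^ 2 := by
  have hu_cont : ContinuousOn u (Icc a b) := fun x hx => (hu x hx).continuousAt.continuousWithinAt
  have hpicone := sub_le_integral_of_hasDeriv_right_of_le
    (φ := fun x => u' x ^ 2 - (π / (b - a)) ^ 2 * u x ^ 2) hab.le
    (continuousOn_piconeTerm hab hu hu' ha hb)
    (fun x hx => (hasDerivAt_piconeTerm (hu x (Ioo_subset_Icc_self hx))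
      (sin_pi_div_mul_sub_pos hx).ne').hasDerivWithinAt)
    ((hu'.pow 2).sub (continuousOn_const.mul (hu_cont.pow 2))).integrableOn_Icc
    (fun x _ => sub_le_self _ (sq_nonneg _))
  have hu'_sq : IntervalIntegrable (fun x => u' x ^ 2) volume a b :=
    (hu'.pow 2).intervalIntegrable_of_Icc hab.le
  have hu_sq : IntervalIntegrable (fun x => u x ^ 2) volume a b :=
    (hu_cont.pow 2).intervalIntegrable_of_Icc hab.le
  rw [integral_sub hu'_sq (hu_sq.const_mul _), integral_const_mul] at hpicone
  simp only [piconeTerm, ha, hb] at hpicone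
  linarith

end Wirtinger

section RpowEnergy

variable {a b γ : ℝ} {y y' y'' : ℝ → ℝ}

theorem wirtinger_inequality_rpow (hab : a < b) (hγ : 2 ≤ γ)
    (hy : ∀ x ∈ Icc a b, HasDerivAt y (y' x) x) (hy' : ContinuousOn y' (Icc a b))
    (hnonneg : ∀ x ∈ Icc a b, 0 ≤ y x) (ha : y a = 0) (hb : y b = 0) :
    (π / (b - a)) ^ 2 * ∫ x in a..b, y x ^ γ
      ≤ γ ^ 2 / 4 * ∫ x in a..b, y x ^ (γ - 2) * y' x ^ 2 := by
  have hy_cont : ContinuousOn y (Icc a b) := fun x hx => (hy x hx).continuousAt.continuousWithinAt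
  have hsq : ∀ p : ℝ, ∀ x ∈ uIcc a b, (y x ^ (p / 2)) ^ 2 = y x ^ p := fun p x hx => by
    rw [uIcc_of_le hab.le] at hx
    rw [← rpow_mul_natCast (hnonneg x hx)]
    norm_num
  have h := wirtinger_inequality hab (u := fun x => y x ^ (γ / 2))
    (fun x hx => (hy x hx).rpow_const (Or.inr (by linarith)))
    ((hy'.mul continuousOn_const).mul (hy_cont.rpow_const fun _ _ => Or.inr (by linarith)))
    (by simp only [ha]; exact zero_rpow (by positivity))
    (by simp only [hb]; exact zero_rpow (by positivity))
  calc (π / (b - a)) ^ 2 * ∫ x in a..b, y x ^ γ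
      = (π / (b - a)) ^ 2 * ∫ x in a..b, (y x ^ (γ / 2)) ^ 2 := by rw [integral_congr (hsq γ)]
    _ ≤ ∫ x in a..b, (y' x * (γ / 2) * y x ^ (γ / 2 - 1)) ^ 2 := h
    _ = γ ^ 2 / 4 * ∫ x in a..b, y x ^ (γ - 2) * y' x ^ 2 := by
      rw [← integral_const_mul]
      refine integral_congr fun x hx => ?_
      rw [mul_pow, mul_pow, show γ / 2 - 1 = (γ - 2) / 2 by ring, hsq _ x hx]
      ring

theorem integral_rpow_mul_deriv_deriv (hγ : 2 ≤ γ)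
    (hy : ∀ x ∈ uIcc a b, HasDerivAt y (y' x) x) (hy' : ∀ x ∈ uIcc a b, HasDerivAt y' (y'' x) x)
    (hy'' : ContinuousOn y'' (uIcc a b)) (ha : y a = 0) (hb : y b = 0) :
    ∫ x in a..b, y x ^ (γ - 1) * y'' x = -((γ - 1) * ∫ x in a..b, y x ^ (γ - 2) * y' x ^ 2) := by
  have hy_cont : ContinuousOn y (uIcc a b) := fun x hx => (hy x hx).continuousAt.continuousWithinAt
  have hy'_cont : ContinuousOn y' (uIcc a b) :=
    fun x hx => (hy' x hx).continuousAt.continuousWithinAt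
  have hz : ∀ x ∈ uIcc a b,
      HasDerivAt (fun x => y x ^ (γ - 1)) (y' x * (γ - 1) * y x ^ (γ - 2)) x := fun x hx => by
    convert (hy x hx).rpow_const (p := γ - 1) (Or.inr (by linarith)) using 3
    ring
  have hz' : ContinuousOn (fun x => y' x * (γ - 1) * y x ^ (γ - 2)) (uIcc a b) :=
    (hy'_cont.mul continuousOn_const).mul (hy_cont.rpow_const fun _ _ => Or.inr (by linarith))
  rw [integral_mul_deriv_eq_deriv_mul hz hy' hz'.intervalIntegrable hy''.intervalIntegrable,
    ha, hb, zero_rpow (by linarith), zero_mul, zero_mul, sub_zero, zero_sub, ← integral_const_mul]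
  exact congrArg _ (integral_congr fun x _ => by ring)

theorem integral_mul_deriv_rpow {W V : ℝ → ℝ} (hγ : 1 ≤ γ)
    (hy : ∀ x ∈ uIcc a b, HasDerivAt y (y' x) x) (hy' : ContinuousOn y' (uIcc a b))
    (hW : ∀ x ∈ uIcc a b, HasDerivAt W (V x) x) (hV : ContinuousOn V (uIcc a b))
    (ha : y a = 0) (hb : y b = 0) :
    ∫ x in a..b, W x * (y' x * γ * y x ^ (γ - 1)) = -∫ x in a..b, V x * y x ^ γ := by
  have hy_cont : ContinuousOn y (uIcc a b) := fun x hx => (hy x hx).continuousAt.continuousWithinAt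
  have hw' : ContinuousOn (fun x => y' x * γ * y x ^ (γ - 1)) (uIcc a b) :=
    (hy'.mul continuousOn_const).mul (hy_cont.rpow_const fun _ _ => Or.inr (by linarith))
  rw [integral_mul_deriv_eq_deriv_mul hW (fun x hx => (hy x hx).rpow_const (Or.inr hγ))
    hV.intervalIntegrable hw'.intervalIntegrable, ha, hb, zero_rpow (by linarith), mul_zero,
    mul_zero, sub_zero, zero_sub]

theorem eigenvalue_mul_integral_rpow_eq {lam : ℝ} {W V : ℝ → ℝ} (hγ : 2 ≤ γ)
    (hy : ∀ x ∈ uIcc a b, HasDerivAt y (y' x) x) (hy' : ∀ x ∈ uIcc a b, HasDerivAt y' (y'' x) x)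
    (hy'' : ContinuousOn y'' (uIcc a b)) (hW : ∀ x ∈ uIcc a b, HasDerivAt W (V x) x)
    (hV : ContinuousOn V (uIcc a b)) (hnonneg : ∀ x ∈ uIcc a b, 0 ≤ y x)
    (ha : y a = 0) (hb : y b = 0)
    (hODE : ∀ x ∈ uIcc a b, y'' x - W x * y' x - V x * y x + lam * y x = 0) :
    lam * ∫ x in a..b, y x ^ γ = (γ - 1) * (∫ x in a..b, y x ^ (γ - 2) * y' x ^ 2)
      + (1 - 1 / γ) * ∫ x in a..b, V x * y x ^ γ := by
  have hy_cont : ContinuousOn y (uIcc a b) := fun x hx => (hy x hx).continuousAt.continuousWithinAt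
  have hy'_cont : ContinuousOn y' (uIcc a b) :=
    fun x hx => (hy' x hx).continuousAt.continuousWithinAt
  have hpow_cont : ∀ p : ℝ, 0 ≤ p → ContinuousOn (fun x => y x ^ p) (uIcc a b) :=
    fun p hp => hy_cont.rpow_const fun _ _ => Or.inr hp
  have hode : ∀ x ∈ uIcc a b, y x ^ (γ - 1) * y'' x
      = γ⁻¹ * (W x * (y' x * γ * y x ^ (γ - 1))) + (V x * y x ^ γ - lam * y x ^ γ) := by
    intro x hx
    have hpow : y x ^ γ = y x ^ (γ - 1) * y x := by
      rw [← rpow_add_one' (hnonneg x hx) (by linarith), sub_add_cancel]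
    rw [hpow]
    linear_combination y x ^ (γ - 1) * hODE x hx
      - W x * y' x * y x ^ (γ - 1) * inv_mul_cancel₀ (by linarith : γ ≠ 0)
  have hW_cont : ContinuousOn W (uIcc a b) := fun x hx => (hW x hx).continuousAt.continuousWithinAt
  have hWy : IntervalIntegrable (fun x => W x * (y' x * γ * y x ^ (γ - 1))) volume a b :=
    (hW_cont.mul ((hy'_cont.mul continuousOn_const).mul
      (hpow_cont _ (by linarith)))).intervalIntegrable
  have hVy : IntervalIntegrable (fun x => V x * y x ^ γ) volume a b :=
    (hV.mul (hpow_cont γ (by linarith))).intervalIntegrable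
  have hy_pow : IntervalIntegrable (fun x => y x ^ γ) volume a b :=
    (hpow_cont γ (by linarith)).intervalIntegrable
  have h := integral_rpow_mul_deriv_deriv hγ hy hy' hy'' ha hb
  rw [integral_congr hode, integral_add (hWy.const_mul _) (hVy.sub (hy_pow.const_mul _)),
    integral_const_mul, integral_sub hVy (hy_pow.const_mul _), integral_const_mul,
    integral_mul_deriv_rpow (by linarith) hy hy'_cont hW hV ha hb] at h
  linear_combination -h

end RpowEnergy

theorem cos_mul_pos_of_mem_Icc {c B t : ℝ} (hc : 0 ≤ c) (hcB : c * B < π / 2)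
    (ht : t ∈ Icc (-B) B) : 0 < cos (c * t) := by
  have h : |c * t| < π / 2 := by
    rw [abs_mul, abs_of_nonneg hc]
    exact (mul_le_mul_of_nonneg_left (abs_le.2 ht) hc).trans_lt hcB
  exact cos_pos_of_mem_Ioo (abs_lt.1 h)

theorem hasDerivAt_mul_tan_mul {c t : ℝ} (h : cos (c * t) ≠ 0) :
    HasDerivAt (fun t => c * tan (c * t)) (c ^ 2 * (1 / cos (c * t) ^ 2)) t :=
  (((hasDerivAt_tan h).comp t ((hasDerivAt_id t).const_mul c)).const_mul c).congr_deriv (by ring)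

theorem continuousOn_one_div_cos_mul_sq {c : ℝ} {s : Set ℝ} (h : ∀ t ∈ s, cos (c * t) ≠ 0) :
    ContinuousOn (fun t => 1 / cos (c * t) ^ 2) s :=
  continuousOn_const.div (by fun_prop) fun t ht => pow_ne_zero 2 (h t ht)

theorem one_le_one_div_cos_sq {x : ℝ} (h : cos x ≠ 0) : 1 ≤ 1 / cos x ^ 2 :=
  one_le_one_div (by positivity) (cos_sq_le_one x)

theorem eigenvalue_lower_bound {a b γ lam V₀ : ℝ} {y y' y'' W V : ℝ → ℝ} (hab : a < b)
    (hγ : 2 ≤ γ)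
    (hy : ∀ x ∈ Icc a b, HasDerivAt y (y' x) x) (hy' : ∀ x ∈ Icc a b, HasDerivAt y' (y'' x) x)
    (hy'' : ContinuousOn y'' (Icc a b)) (hW : ∀ x ∈ Icc a b, HasDerivAt W (V x) x)
    (hV : ContinuousOn V (Icc a b)) (hV₀ : ∀ x ∈ Icc a b, V₀ ≤ V x)
    (hnonneg : ∀ x ∈ Icc a b, 0 ≤ y x) (ha : y a = 0) (hb : y b = 0)
    (hpos : ∀ x ∈ Ioo a b, 0 < y x)
    (hODE : ∀ x ∈ Icc a b, y'' x - W x * y' x - V x * y x + lam * y x = 0) :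
    4 * (γ - 1) / γ ^ 2 * (π / (b - a)) ^ 2 + (1 - 1 / γ) * V₀ ≤ lam := by
  have hIcc : uIcc a b = Icc a b := uIcc_of_le hab.le
  have henergy := eigenvalue_mul_integral_rpow_eq hγ (hIcc ▸ hy) (hIcc ▸ hy') (hIcc ▸ hy'')
    (hIcc ▸ hW) (hIcc ▸ hV) (hIcc ▸ hnonneg) ha hb (hIcc ▸ hODE)
  have hwirt := wirtinger_inequality_rpow hab hγ hy
    (fun x hx => (hy' x hx).continuousAt.continuousWithinAt) hnonneg ha hb
  have hy_pow : ContinuousOn (fun x => y x ^ γ) (Icc a b) :=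
    fun x hx => ((hy x hx).continuousAt.rpow_const (Or.inr (by linarith))).continuousWithinAt
  have hV_int : V₀ * ∫ x in a..b, y x ^ γ ≤ ∫ x in a..b, V x * y x ^ γ := by
    rw [← integral_const_mul]
    exact integral_mono_on hab.le ((hy_pow.intervalIntegrable_of_Icc hab.le).const_mul _)
      ((hV.mul hy_pow).intervalIntegrable_of_Icc hab.le)
      fun x hx => mul_le_mul_of_nonneg_right (hV₀ x hx) (rpow_nonneg (hnonneg x hx) γ)
  have hL : 0 < ∫ x in a..b, y x ^ γ := intervalIntegral_pos_of_pos_on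
    (hy_pow.intervalIntegrable_of_Icc hab.le) (fun x hx => rpow_pos_of_pos (hpos x hx) γ) hab
  have hJ : 4 / γ ^ 2 * ((π / (b - a)) ^ 2 * ∫ x in a..b, y x ^ γ)
      ≤ ∫ x in a..b, y x ^ (γ - 2) * y' x ^ 2 := by
    rw [div_mul_eq_mul_div, div_le_iff₀ (by positivity)]
    linarith
  have hγ₁ : 0 ≤ 1 - 1 / γ := by
    rw [sub_nonneg, div_le_one (by linarith)]
    linarith
  rw [← mul_le_mul_iff_of_pos_right hL, henergy]
  calc (4 * (γ - 1) / γ ^ 2 * (π / (b - a)) ^ 2 + (1 - 1 / γ) * V₀) * ∫ x in a..b, y x ^ γ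
      = (γ - 1) * (4 / γ ^ 2 * ((π / (b - a)) ^ 2 * ∫ x in a..b, y x ^ γ))
        + (1 - 1 / γ) * (V₀ * ∫ x in a..b, y x ^ γ) := by ring
    _ ≤ _ := by gcongr; linarith

theorem key_eigenvalue_inequality_general (a b m : ℕ) (hm : 1 ≤ m)
    (κ₁ κ₂ : ℝ) (hκ₁ : 0 ≤ κ₁) (hκ₂ : 0 ≤ κ₂) (D : ℝ) (hD : 0 < D)
    (hD₂ : Real.sqrt κ₂ * (D / 2) < Real.pi / 2)
    (hD₁ : 2 * Real.sqrt κ₁ * (D / 2) < Real.pi / 2)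
    (W V : ℝ → ℝ)
    (hW : ∀ t, W t = 2 * a * ((m : ℝ) - 1) * Real.sqrt κ₂ * Real.tan (Real.sqrt κ₂ * t)
        + 2 * b * Real.sqrt κ₁ * Real.tan (2 * Real.sqrt κ₁ * t))
    (hV : ∀ t, V t = 2 * a * ((m : ℝ) - 1) * κ₂ * (1 / Real.cos (Real.sqrt κ₂ * t) ^ 2)
        + 4 * b * κ₁ * (1 / Real.cos (2 * Real.sqrt κ₁ * t) ^ 2))
    (lam : ℝ) (y y' y'' : ℝ → ℝ)
    (hd1 : ∀ t ∈ Icc (-(D / 2)) (D / 2), HasDerivAt y (y' t) t)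
    (hd2 : ∀ t ∈ Icc (-(D / 2)) (D / 2), HasDerivAt y' (y'' t) t)
    (hc2 : ContinuousOn y'' (Icc (-(D / 2)) (D / 2)))
    (hnonneg : ∀ t ∈ Icc (-(D / 2)) (D / 2), 0 ≤ y t)
    (hbd₁ : y (-(D / 2)) = 0) (hbd₂ : y (D / 2) = 0)
    (hpos : ∀ t ∈ Ioo (-(D / 2)) (D / 2), 0 < y t)
    (hODE : ∀ t ∈ Icc (-(D / 2)) (D / 2),
      y'' t - W t * y' t - V t * y t + lam * y t = 0) :
    ∀ γ : ℝ, 2 ≤ γ →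
      4 * (γ - 1) / γ ^ 2 * (Real.pi ^ 2 / D ^ 2)
        + (1 - 1 / γ) * (2 * a * ((m : ℝ) - 1) * κ₂ + 4 * b * κ₁) ≤ lam := by
  intro γ hγ
  have hm₁ : (0 : ℝ) ≤ (m : ℝ) - 1 := sub_nonneg.2 (by exact_mod_cast hm)
  have hcos₂ : ∀ t ∈ Icc (-(D / 2)) (D / 2), cos (√κ₂ * t) ≠ 0 :=
    fun t ht => (cos_mul_pos_of_mem_Icc (sqrt_nonneg _) hD₂ ht).ne'
  have hcos₁ : ∀ t ∈ Icc (-(D / 2)) (D / 2), cos (2 * √κ₁ * t) ≠ 0 :=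
    fun t ht => (cos_mul_pos_of_mem_Icc (by positivity) hD₁ ht).ne'
  have hW_eq : W = (fun t => 2 * a * ((m : ℝ) - 1) * (√κ₂ * tan (√κ₂ * t)))
      + fun t => (b : ℝ) * (2 * √κ₁ * tan (2 * √κ₁ * t)) :=
    funext fun t => by rw [hW, Pi.add_apply]; ring
  have hV_eq : ∀ t, V t = 2 * a * ((m : ℝ) - 1) * (√κ₂ ^ 2 * (1 / cos (√κ₂ * t) ^ 2))
      + b * ((2 * √κ₁) ^ 2 * (1 / cos (2 * √κ₁ * t) ^ 2)) := fun t => by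
    rw [hV, mul_pow, sq_sqrt hκ₁, sq_sqrt hκ₂]; ring
  have h := eigenvalue_lower_bound (by linarith) hγ hd1 hd2 hc2
    (fun t ht => by
      rw [hW_eq, hV_eq]
      exact ((hasDerivAt_mul_tan_mul (hcos₂ t ht)).const_mul _).add
        ((hasDerivAt_mul_tan_mul (hcos₁ t ht)).const_mul _))
    (funext hV ▸ (continuousOn_const.mul (continuousOn_one_div_cos_mul_sq hcos₂)).add
      (continuousOn_const.mul (continuousOn_one_div_cos_mul_sq hcos₁)))
    (fun t ht => by
      rw [hV]
      exact add_le_add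
        (le_mul_of_one_le_right (by positivity) (one_le_one_div_cos_sq (hcos₂ t ht)))
        (le_mul_of_one_le_right (by positivity) (one_le_one_div_cos_sq (hcos₁ t ht))))
    hnonneg hbd₁ hbd₂ hpos hODE
  rwa [show D / 2 - -(D / 2) = D by ring, div_pow] at h

/-- The key intermediate inequality in the proof of Proposition 5.1: if `y ≥ 0`
vanishes at the endpoints of `[-D/2, D/2]`, is positive inside, and satisfies
`y'' - W y' - V y + λ y = 0`, where
`W(t) = 2a(m-1)√κ₂ tan(√κ₂ t) + 2b√κ₁ tan(2√κ₁ t)` and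
`V(t) = 2a(m-1)κ₂ sec²(√κ₂ t) + 4bκ₁ sec²(2√κ₁ t)`, then for every `γ ≥ 2`,
`λ ≥ (4(γ-1)/γ²) π²/D² + (1 - 1/γ)(2a(m-1)κ₂ + 4bκ₁)`. -/
theorem key_eigenvalue_inequality (a b m : ℕ) (ha : 0 < a) (hb : 0 < b) (hm : 1 ≤ m)
    (κ₁ κ₂ : ℝ) (hκ₁ : 0 ≤ κ₁) (hκ₂ : 0 ≤ κ₂) (D : ℝ) (hD : 0 < D)
    (hD₂ : Real.sqrt κ₂ * (D / 2) < Real.pi / 2)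
    (hD₁ : 2 * Real.sqrt κ₁ * (D / 2) < Real.pi / 2)
    (W V : ℝ → ℝ)
    (hW : ∀ t, W t = 2 * a * ((m : ℝ) - 1) * Real.sqrt κ₂ * Real.tan (Real.sqrt κ₂ * t)
        + 2 * b * Real.sqrt κ₁ * Real.tan (2 * Real.sqrt κ₁ * t))
    (hV : ∀ t, V t = 2 * a * ((m : ℝ) - 1) * κ₂ * (1 / Real.cos (Real.sqrt κ₂ * t) ^ 2)
        + 4 * b * κ₁ * (1 / Real.cos (2 * Real.sqrt κ₁ * t) ^ 2))
    (lam : ℝ) (y y' y'' : ℝ → ℝ)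
    (hd1 : ∀ t ∈ Icc (-(D / 2)) (D / 2), HasDerivAt y (y' t) t)
    (hd2 : ∀ t ∈ Icc (-(D / 2)) (D / 2), HasDerivAt y' (y'' t) t)
    (hc2 : ContinuousOn y'' (Icc (-(D / 2)) (D / 2)))
    (hnonneg : ∀ t ∈ Icc (-(D / 2)) (D / 2), 0 ≤ y t)
    (hne : ¬ ∀ t ∈ Icc (-(D / 2)) (D / 2), y t = 0)
    (hbd₁ : y (-(D / 2)) = 0) (hbd₂ : y (D / 2) = 0)
    (hpos : ∀ t ∈ Ioo (-(D / 2)) (D / 2), 0 < y t)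
    (hODE : ∀ t ∈ Icc (-(D / 2)) (D / 2),
      y'' t - W t * y' t - V t * y t + lam * y t = 0) :
    ∀ γ : ℝ, 2 ≤ γ →
      4 * (γ - 1) / γ ^ 2 * (Real.pi ^ 2 / D ^ 2)
        + (1 - 1 / γ) * (2 * a * ((m : ℝ) - 1) * κ₂ + 4 * b * κ₁) ≤ lam :=
  key_eigenvalue_inequality_general a b m hm κ₁ κ₂ hκ₁ hκ₂ D hD hD₂ hD₁ W V hW hV lam y y' y'' hd1
    hd2 hc2 hnonneg hbd₁ hbd₂ hpos hODE
end
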